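/- arXiv:2506.16708 — 8 statements merged into one kernel-verified Lean document; each statement's English description precedes it below -/
import Mathlib

section
/- For every n ≥ 1 and every 0 ≤ k ≤ n, the representation of the orthogonal group O(n) on the k-th exterior power ⋀^k ℂ^n, given by g ↦ ⋀^k(g_ℂ) where g_ℂ : ℂ^n → ℂ^n is the complexification of the linear map x ↦ g·x, is irreducible: every complex subspace U ⊆ ⋀^k ℂ^n satisfying (⋀^k g_ℂ)(U) ⊆ U for all g ∈ O(n) equals 0 or all of ⋀^k ℂ^n. -/
noncomputable section IrredAux

open ExteriorAlgebra Finset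

variable (n : ℕ)

/-- standard basis vector -/
def Ev (j : Fin n) : Fin n → ℂ := Pi.single j 1

/-- k-subsets of `Fin n` -/
abbrev KS (k : ℕ) := {s : Finset (Fin n) // s.card = k}

/-- wedge of standard basis vectors indexed by a k-subset -/
def eS (k : ℕ) (s : KS n k) : ExteriorAlgebra ℂ (Fin n → ℂ) :=
  ExteriorAlgebra.ιMulti_family ℂ k (Ev n) s

/-- complex sign character value -/
def sgn (b : Fin n → Bool) (i : Fin n) : ℂ := if b i then 1 else -1

lemma sgn_ne_zero (b : Fin n → Bool) (i : Fin n) : sgn n b i ≠ 0 := by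
  unfold sgn; by_cases h : b i <;> simp [h]

lemma sum_sgn_prod (W : Finset (Fin n)) :
    ∑ b : Fin n → Bool, ∏ i ∈ W, sgn n b i = if W = ∅ then ((2 : ℂ) ^ n) else 0 := by
  have h1 : ∀ b : Fin n → Bool, (∏ i ∈ W, sgn n b i)
      = ∏ i : Fin n, (if i ∈ W then sgn n b i else 1) := by
    intro b
    rw [Finset.prod_ite_mem, Finset.univ_inter]
  simp only [h1]
  have := (Fintype.prod_sum (fun (i : Fin n) (x : Bool) =>
    if i ∈ W then (if x then (1:ℂ) else -1) else 1)).symm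
  rw [show (∑ b : Fin n → Bool, ∏ i : Fin n, (if i ∈ W then sgn n b i else 1))
      = ∑ b : ∀ _ : Fin n, Bool, ∏ i : Fin n,
        (fun (i : Fin n) (x : Bool) => if i ∈ W then (if x then (1:ℂ) else -1) else 1) i (b i)
      from rfl, this]
  by_cases hW : W = ∅
  · subst hW; simp
  · rw [if_neg hW]
    obtain ⟨i0, hi0⟩ := Finset.nonempty_iff_ne_empty.2 hW
    apply Finset.prod_eq_zero (Finset.mem_univ i0)
    simp [hi0]

lemma prod_sgn_mul (b : Fin n → Bool) (S T : Finset (Fin n)) :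
    (∏ i ∈ S, sgn n b i) * (∏ i ∈ T, sgn n b i) = ∏ i ∈ symmDiff S T, sgn n b i := by
  have hS : ∏ i ∈ S, sgn n b i = (∏ i ∈ S \ T, sgn n b i) * ∏ i ∈ S ∩ T, sgn n b i := by
    rw [← Finset.prod_union (Finset.disjoint_sdiff_inter S T), Finset.sdiff_union_inter]
  have hT : ∏ i ∈ T, sgn n b i = (∏ i ∈ T \ S, sgn n b i) * ∏ i ∈ S ∩ T, sgn n b i := by
    rw [Finset.inter_comm,
      ← Finset.prod_union (Finset.disjoint_sdiff_inter T S), Finset.sdiff_union_inter]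
  have hsq : (∏ i ∈ S ∩ T, sgn n b i) * (∏ i ∈ S ∩ T, sgn n b i) = 1 := by
    rw [← Finset.prod_mul_distrib]
    refine Finset.prod_eq_one fun i _ => ?_
    unfold sgn; by_cases h : b i <;> simp [h]
  have hsd : symmDiff S T = (S \ T) ∪ (T \ S) := by
    rw [symmDiff_def]; rfl
  rw [hS, hT, mul_mul_mul_comm, hsq, mul_one, hsd,
    Finset.prod_union disjoint_sdiff_sdiff]

lemma sum_sgn_mul (S T : Finset (Fin n)) :
    ∑ b : Fin n → Bool, (∏ i ∈ S, sgn n b i) * (∏ i ∈ T, sgn n b i)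
      = if S = T then ((2 : ℂ) ^ n) else 0 := by
  simp only [prod_sgn_mul]
  rw [sum_sgn_prod]
  congr 1
  have h : symmDiff S T = ∅ ↔ S = T := by
    rw [← Finset.bot_eq_empty]; exact symmDiff_eq_bot
  simp [h]

lemma iMulti_inj {k : ℕ} (r : Fin k → Fin n) (hr : Function.Injective r)
    (s : KS n k) (him : Finset.image r Finset.univ = s.1) :
    ∃ c : ℂ, c ≠ 0 ∧ ExteriorAlgebra.ιMulti ℂ k (fun i => Ev n (r i))
      = c • eS n k s := by
  have hmem : ∀ i, r i ∈ s.1 := fun i => him ▸ Finset.mem_image_of_mem r (Finset.mem_univ i)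
  let f : Fin k → s.1 := fun i => ⟨r i, hmem i⟩
  have hf : Function.Injective f := fun i j h => hr (congrArg Subtype.val h)
  have hbij : Function.Bijective f := by
    rw [Fintype.bijective_iff_injective_and_card]
    exact ⟨hf, by simp [Fintype.card_coe, s.2]⟩
  let e : Fin k ≃ s.1 := Equiv.ofBijective f hbij
  let m := s.1.orderIsoOfFin s.2
  let σ : Equiv.Perm (Fin k) := e.trans m.toEquiv.symm
  have hms : ∀ i, (m (σ i) : Fin n) = r i := by
    intro i
    have : m (m.toEquiv.symm (e i)) = e i := m.toEquiv.apply_symm_apply (e i)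
    show ((m (m.toEquiv.symm (e i)) : Fin n)) = r i
    rw [this]
    rfl
  refine ⟨((Equiv.Perm.sign σ : ℤ) : ℂ), by
    rcases Int.units_eq_one_or (Equiv.Perm.sign σ) with h | h <;> simp [h], ?_⟩
  have : (fun i => Ev n (r i)) = (fun i => Ev n (m i)) ∘ σ := by
    funext i; simp only [Function.comp_apply, hms]
  rw [this, AlternatingMap.map_perm]
  rw [Units.smul_def, ← Int.cast_smul_eq_zsmul ℂ]
  rfl

lemma Ev_expand (x : Fin n → ℂ) : x = ∑ j : Fin n, x j • Ev n j := by
  funext i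
  simp [Ev, Finset.sum_apply, Pi.single_apply]

lemma exteriorPower_le_span (k : ℕ) :
    ⋀[ℂ]^k (Fin n → ℂ) ≤ Submodule.span ℂ (Set.range (eS n k)) := by
  rw [← ExteriorAlgebra.ιMulti_span_fixedDegree, Submodule.span_le]
  rintro _ ⟨v, rfl⟩
  have hv : (ExteriorAlgebra.ιMulti ℂ k v : ExteriorAlgebra ℂ (Fin n → ℂ))
      = ∑ r : Fin k → Fin n, (∏ i, v i (r i)) •
          ExteriorAlgebra.ιMulti ℂ k (fun i => Ev n (r i)) := by
    have h1 : (ExteriorAlgebra.ιMulti ℂ k v)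
        = ExteriorAlgebra.ιMulti ℂ k (fun i => ∑ j : Fin n, v i j • Ev n j) := by
      congr 1; funext i; exact Ev_expand n (v i)
    rw [h1]
    have h2 := (ExteriorAlgebra.ιMulti ℂ k (M := Fin n → ℂ)).toMultilinearMap.map_sum
      (g := fun i j => v i j • Ev n j)
    rw [show ((ExteriorAlgebra.ιMulti ℂ k) fun i => ∑ j : Fin n, v i j • Ev n j)
        = (ExteriorAlgebra.ιMulti ℂ k (M := Fin n → ℂ)).toMultilinearMap
          (fun i => ∑ j : Fin n, v i j • Ev n j) from rfl, h2]
    refine Finset.sum_congr rfl fun r _ => ?_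
    exact (ExteriorAlgebra.ιMulti ℂ k (M := Fin n → ℂ)).toMultilinearMap.map_smul_univ
      (fun i => v i (r i)) (fun i => Ev n (r i))
  rw [hv]
  apply Submodule.sum_mem
  intro r _
  apply Submodule.smul_mem
  by_cases hr : Function.Injective r
  · have hcard : (Finset.image r Finset.univ).card = k := by
      rw [Finset.card_image_of_injective _ hr, Finset.card_univ, Fintype.card_fin]
    obtain ⟨c, _, hc⟩ := iMulti_inj n r hr ⟨Finset.image r Finset.univ, hcard⟩ rfl
    rw [hc]
    exact Submodule.smul_mem _ _ (Submodule.subset_span ⟨_, rfl⟩)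
  · rw [Function.not_injective_iff] at hr
    obtain ⟨i, j, hij, hne⟩ := hr
    rw [(ExteriorAlgebra.ιMulti ℂ k).map_eq_zero_of_eq _ (by rw [hij]) hne]
    exact Submodule.zero_mem _

/-- the ±1 diagonal matrix attached to a sign vector -/
def Dmat (b : Fin n → Bool) : Matrix (Fin n) (Fin n) ℝ :=
  Matrix.diagonal (fun i => if b i then 1 else -1)

lemma Dmat_mem (b : Fin n → Bool) : Dmat n b ∈ Matrix.orthogonalGroup (Fin n) ℝ := by
  rw [Matrix.mem_orthogonalGroup_iff]
  have : (Dmat n b).transpose = Dmat n b := by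
    simp [Dmat, Matrix.diagonal_transpose]
  rw [this, Dmat, Matrix.diagonal_mul_diagonal]
  have h1 : (fun i => (if b i then (1:ℝ) else -1) * (if b i then 1 else -1))
      = fun _ => (1:ℝ) := by
    funext i; by_cases h : b i <;> simp [h]
  rw [h1, Matrix.diagonal_one]

lemma Dmat_mulVecLin (b : Fin n → Bool) (j : Fin n) :
    ((Dmat n b).map Complex.ofReal).mulVecLin (Ev n j) = sgn n b j • Ev n j := by
  have hmap : (Dmat n b).map Complex.ofReal
      = Matrix.diagonal (fun i => sgn n b i) := by
    ext i l
    by_cases h : i = l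
    · subst h
      by_cases hb : b i <;>
        simp [Dmat, sgn, Matrix.diagonal_apply_eq, Matrix.map_apply, hb]
    · simp [Dmat, sgn, Matrix.diagonal_apply_ne _ h, Matrix.map_apply, h]
  rw [hmap]
  show Matrix.mulVec _ (Ev n j) = _
  rw [Ev, Matrix.diagonal_mulVec_single]
  funext i
  by_cases h : i = j <;> simp [h, Pi.single_apply]

lemma map_diag_eS (b : Fin n → Bool) {k : ℕ} (s : KS n k) :
    ExteriorAlgebra.map ((Dmat n b).map Complex.ofReal).mulVecLin (eS n k s)
      = (∏ i ∈ s.1, sgn n b i) • eS n k s := by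
  rw [show eS n k s = ExteriorAlgebra.ιMulti ℂ k (fun i => Ev n (s.1.orderIsoOfFin s.2 i))
    from rfl, ExteriorAlgebra.map_apply_ιMulti]
  have h1 : (((Dmat n b).map Complex.ofReal).mulVecLin ∘ fun i =>
        Ev n (s.1.orderIsoOfFin s.2 i))
      = fun i => sgn n b (s.1.orderIsoOfFin s.2 i) • Ev n (s.1.orderIsoOfFin s.2 i) := by
    funext i; exact Dmat_mulVecLin n b _
  rw [h1]
  have h2 := (ExteriorAlgebra.ιMulti ℂ k (M := Fin n → ℂ)).toMultilinearMap.map_smul_univ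
    (fun i => sgn n b (s.1.orderIsoOfFin s.2 i))
    (fun i => Ev n (s.1.orderIsoOfFin s.2 i))
  rw [show ((ExteriorAlgebra.ιMulti ℂ k) fun i =>
        sgn n b (s.1.orderIsoOfFin s.2 i) • Ev n (s.1.orderIsoOfFin s.2 i))
      = (ExteriorAlgebra.ιMulti ℂ k (M := Fin n → ℂ)).toMultilinearMap
        (fun i => sgn n b (s.1.orderIsoOfFin s.2 i) • Ev n (s.1.orderIsoOfFin s.2 i))
      from rfl, h2]
  congr 1
  exact ((Equiv.prod_comp (s.1.orderIsoOfFin s.2).toEquiv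
      (fun j => sgn n b (j : Fin n))).trans
    (Finset.prod_coe_sort s.1 (fun j => sgn n b j)))

/-- the permutation matrix attached to `σ` -/
def Pmat (σ : Equiv.Perm (Fin n)) : Matrix (Fin n) (Fin n) ℝ :=
  Matrix.of fun i l => if i = σ l then 1 else 0

lemma Pmat_mem (σ : Equiv.Perm (Fin n)) : Pmat n σ ∈ Matrix.orthogonalGroup (Fin n) ℝ := by
  rw [Matrix.mem_orthogonalGroup_iff']
  ext i j
  have h0 : ∀ x : Fin n, ((if x = σ i then (1:ℝ) else 0) * (if x = σ j then 1 else 0))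
      = if x = σ i ∧ x = σ j then 1 else 0 := by
    intro x; by_cases h1 : x = σ i <;> by_cases h2 : x = σ j <;> simp [h1, h2]
  simp only [Matrix.mul_apply, Matrix.star_eq_conjTranspose, Matrix.conjTranspose_apply,
    Matrix.transpose_apply, Pmat, Matrix.of_apply, star_trivial, Matrix.one_apply, h0]
  by_cases h : i = j
  · subst h; simp
  · rw [if_neg h]
    refine Finset.sum_eq_zero fun x _ => ?_
    rw [if_neg]
    rintro ⟨rfl, h2⟩
    exact h (σ.injective h2)

lemma Pmat_mulVecLin (σ : Equiv.Perm (Fin n)) (j : Fin n) :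
    ((Pmat n σ).map Complex.ofReal).mulVecLin (Ev n j) = Ev n (σ j) := by
  show Matrix.mulVec _ (Ev n j) = _
  rw [Ev, Matrix.mulVec_single]
  funext i
  by_cases h : i = σ j <;>
    simp [Pmat, Ev, Pi.single_apply, Matrix.map_apply, h]

end IrredAux

/-- For `n ≥ 1` and `0 ≤ k ≤ n`, the representation of the orthogonal
group `O(n)` on the `k`-th exterior power `⋀^k ℂ^n`, given by `g ↦ ⋀^k (g_ℂ)` where
`g_ℂ : ℂ^n → ℂ^n` is the complexification of `x ↦ g·x`, is irreducible: every complex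
subspace `U ⊆ ⋀^k ℂ^n` stable under all `⋀^k g_ℂ`, `g ∈ O(n)`, is `0` or all of `⋀^k ℂ^n`.
Here `⋀^k ℂ^n` is realized as the submodule `⋀[ℂ]^k (Fin n → ℂ)` of the exterior algebra,
on which the degree-preserving algebra map `ExteriorAlgebra.map g_ℂ` restricts to `⋀^k g_ℂ`. -/
theorem exteriorPower_orthogonalGroup_irreducible
    (n k : ℕ) (hn : 1 ≤ n) (hk : k ≤ n)
    (U : Submodule ℂ (ExteriorAlgebra ℂ (Fin n → ℂ)))
    (hU : U ≤ ⋀[ℂ]^k (Fin n → ℂ))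
    (hinv : ∀ g : Matrix (Fin n) (Fin n) ℝ, g ∈ Matrix.orthogonalGroup (Fin n) ℝ →
      ∀ v ∈ U, ExteriorAlgebra.map ((g.map (Complex.ofReal)).mulVecLin) v ∈ U) :
    U = ⊥ ∨ U = ⋀[ℂ]^k (Fin n → ℂ) := by
  classical
  by_cases hbot : U = ⊥
  · exact Or.inl hbot
  right
  obtain ⟨v, hvU, hv0⟩ := Submodule.exists_mem_ne_zero_of_ne_bot hbot
  have hvspan : v ∈ Submodule.span ℂ (Set.range (eS n k)) :=
    exteriorPower_le_span n k (hU hvU)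
  rw [Submodule.mem_span_range_iff_exists_fun] at hvspan
  obtain ⟨c, hc⟩ := hvspan
  have hex : ∃ T : KS n k, c T • eS n k T ≠ 0 := by
    by_contra h
    push_neg at h
    apply hv0
    rw [← hc]
    exact Finset.sum_eq_zero fun T _ => h T
  obtain ⟨T, hT⟩ := hex
  have hcT : c T ≠ 0 := fun h => hT (by rw [h, zero_smul])
  -- projection onto the T-component using sign matrices
  have hproj : ((2:ℂ)^n) • (c T • eS n k T) ∈ U := by
    have hw : ∑ b : Fin n → Bool, (∏ i ∈ T.1, sgn n b i) •
        (ExteriorAlgebra.map ((Dmat n b).map Complex.ofReal).mulVecLin v) ∈ U :=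
      Submodule.sum_mem _ fun b _ => Submodule.smul_mem _ _ (hinv _ (Dmat_mem n b) v hvU)
    have hmapv : ∀ b : Fin n → Bool,
        ExteriorAlgebra.map ((Dmat n b).map Complex.ofReal).mulVecLin v
          = ∑ s : KS n k, (∏ i ∈ s.1, sgn n b i) • (c s • eS n k s) := by
      intro b
      rw [← hc, map_sum]
      refine Finset.sum_congr rfl fun s _ => ?_
      rw [map_smul, map_diag_eS, smul_comm]
    have heq : ∑ b : Fin n → Bool, (∏ i ∈ T.1, sgn n b i) •
        (ExteriorAlgebra.map ((Dmat n b).map Complex.ofReal).mulVecLin v)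
        = ((2:ℂ)^n) • (c T • eS n k T) := by
      simp only [hmapv, Finset.smul_sum]
      rw [Finset.sum_comm]
      have h5 : ∀ s : KS n k,
          ∑ b : Fin n → Bool,
            (∏ i ∈ T.1, sgn n b i) • ((∏ i ∈ s.1, sgn n b i) • (c s • eS n k s))
          = (if T.1 = s.1 then ((2:ℂ)^n) else 0) • (c s • eS n k s) := by
        intro s
        simp only [smul_smul, ← mul_assoc]
        rw [← Finset.sum_smul, ← Finset.sum_mul, sum_sgn_mul]
      simp only [h5]
      rw [Fintype.sum_eq_single T]
      · rw [if_pos rfl]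
      · intro s hs
        rw [if_neg (fun h => hs (Subtype.ext h.symm)), zero_smul]
    rw [heq] at hw
    exact hw
  have hTU : eS n k T ∈ U := by
    have hne : ((2:ℂ)^n * c T) ≠ 0 := mul_ne_zero (pow_ne_zero _ two_ne_zero) hcT
    have h3 : (((2:ℂ)^n * c T)⁻¹ • (((2:ℂ)^n) • (c T • eS n k T))) ∈ U :=
      Submodule.smul_mem _ _ hproj
    rwa [smul_smul, smul_smul, mul_assoc, inv_mul_cancel₀ hne, one_smul] at h3
  -- transitivity: move eS T to any eS s via a permutation matrix
  have hall : ∀ s : KS n k, eS n k s ∈ U := by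
    intro s
    have hcardt : Fintype.card {x // x ∈ T.1} = k := by simp [Fintype.card_coe, T.2]
    have hcards : Fintype.card {x // x ∈ s.1} = k := by simp [Fintype.card_coe, s.2]
    let e1 : {x // x ∈ T.1} ≃ {x // x ∈ s.1} :=
      (T.1.orderIsoOfFin T.2).toEquiv.symm.trans (s.1.orderIsoOfFin s.2).toEquiv
    have hcardc : Fintype.card {x : Fin n // ¬ x ∈ T.1}
        = Fintype.card {x : Fin n // ¬ x ∈ s.1} := by
      rw [Fintype.card_subtype_compl, Fintype.card_subtype_compl, hcardt, hcards]
    let e2 : {x : Fin n // ¬ x ∈ T.1} ≃ {x : Fin n // ¬ x ∈ s.1} :=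
      Fintype.equivOfCardEq hcardc
    let σ : Equiv.Perm (Fin n) := Equiv.subtypeCongr e1 e2
    have hσ : ∀ (x : Fin n) (hx : x ∈ T.1), σ x = (e1 ⟨x, hx⟩ : Fin n) := by
      intro x hx
      simp only [σ, Equiv.subtypeCongr, Equiv.trans_apply,
        Equiv.sumCompl_symm_apply_of_pos hx, Equiv.sumCongr_apply, Sum.map_inl,
        Equiv.sumCompl_apply_inl]
    let mT : Fin k → Fin n := fun i => (T.1.orderIsoOfFin T.2 i : Fin n)
    let r : Fin k → Fin n := fun i => σ (mT i)
    have hmTmem : ∀ i, mT i ∈ T.1 := fun i => (T.1.orderIsoOfFin T.2 i).2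
    have hrinj : Function.Injective r := by
      intro i j hij
      have h1 : mT i = mT j := σ.injective hij
      have h2 : T.1.orderIsoOfFin T.2 i = T.1.orderIsoOfFin T.2 j := Subtype.ext h1
      exact (T.1.orderIsoOfFin T.2).toEquiv.injective h2
    have hrs : ∀ i, r i ∈ s.1 := by
      intro i
      rw [show r i = σ (mT i) from rfl, hσ (mT i) (hmTmem i)]
      exact (e1 ⟨mT i, hmTmem i⟩).2
    have him : Finset.image r Finset.univ = s.1 := by
      apply Finset.eq_of_subset_of_card_le
      · intro x hx
        obtain ⟨i, _, rfl⟩ := Finset.mem_image.1 hx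
        exact hrs i
      · rw [Finset.card_image_of_injective _ hrinj, Finset.card_univ, Fintype.card_fin, s.2]
    have hmem := hinv (Pmat n σ) (Pmat_mem n σ) _ hTU
    have hmapeq : ExteriorAlgebra.map ((Pmat n σ).map Complex.ofReal).mulVecLin (eS n k T)
        = ExteriorAlgebra.ιMulti ℂ k (fun i => Ev n (r i)) := by
      rw [show eS n k T = ExteriorAlgebra.ιMulti ℂ k (fun i => Ev n (T.1.orderIsoOfFin T.2 i))
        from rfl, ExteriorAlgebra.map_apply_ιMulti]
      congr 1
      funext i
      exact Pmat_mulVecLin n σ (mT i)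
    obtain ⟨cc, hcc0, hcceq⟩ := iMulti_inj n r hrinj s him
    rw [hmapeq, hcceq] at hmem
    have h4 : (cc⁻¹ • (cc • eS n k s)) ∈ U := Submodule.smul_mem _ _ hmem
    rwa [inv_smul_smul₀ hcc0] at h4
  refine le_antisymm hU ?_
  refine le_trans (exteriorPower_le_span n k) ?_
  rw [Submodule.span_le]
  rintro _ ⟨s, rfl⟩
  exact hall s
end

section
/- Let n ≥ 1 and let F, G : GL_n(ℝ) → ℂ be continuous O(n)-bi-invariant functions such that all integrals below converge absolutely for every h ∈ GL_n(ℝ). Let S₁, T₁, S₂, T₂ ⊆ {1,…,n} with |S₁| = |T₁| and |S₂| = |T₂|. Then for every h ∈ GL_n(ℝ): ∫_{GL_n(ℝ)} Δ_{S₁,T₁}(g) F(g) Δ_{S₂,T₂}(g⁻¹h) G(g⁻¹h) dμ(g) = ([T₁ = S₂] / binom(n,|T₁|)) · Δ_{S₁,T₂}(h) · ∫_{GL_n(ℝ)} F(g) G(g⁻¹h) dμ(g), where [T₁ = S₂] equals 1 if T₁ = S₂ and 0 otherwise. -/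
open MeasureTheory

/-- Lebesgue measure on the space of real `n × n` matrices (product measure over the
`n²` matrix entries). -/
noncomputable instance matrixMeasureSpace (n : ℕ) :
    MeasureSpace (Matrix (Fin n) (Fin n) ℝ) :=
  inferInstanceAs (MeasureSpace (Fin n → Fin n → ℝ))

/-- The (two-sided) Haar measure `dμ(g) = |det g|^{-n} dg` on `GL_n(ℝ)`, viewed as a
measure on `Mat_n(ℝ)` (the complement of `GL_n(ℝ)` has density `0`). -/
noncomputable def haarGL (n : ℕ) : Measure (Matrix (Fin n) (Fin n) ℝ) :=
  volume.withDensity fun g => ENNReal.ofReal ((|g.det| ^ n)⁻¹)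

/-- The minor `Δ_{S,T}(g)`: the determinant of the submatrix of `g` with rows indexed
by `S` and columns by `T`, each taken in increasing order (junk value `0` if
`|S| ≠ |T|`; `Δ_{∅,∅}(g) = 1`). -/
noncomputable def glMinor {n : ℕ} (g : Matrix (Fin n) (Fin n) ℝ)
    (S T : Finset (Fin n)) : ℝ :=
  if h : T.card = S.card then
    Matrix.det (Matrix.of fun i j : Fin S.card =>
      g (S.orderIsoOfFin rfl i) (T.orderIsoOfFin h j))
  else 0

namespace CMB

variable {n p : ℕ}

/-- enumeration of a finset of card p -/
def enum (U : Finset (Fin n)) (h : U.card = p) : Fin p → Fin n :=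
  fun i => (U.orderIsoOfFin h i : Fin n)

lemma enum_injective (U : Finset (Fin n)) (h : U.card = p) :
    Function.Injective (enum U h) := by
  intro i j hij
  exact (U.orderIsoOfFin h).injective (Subtype.ext hij)

lemma enum_mem (U : Finset (Fin n)) (h : U.card = p) (i : Fin p) :
    enum U h i ∈ U := (U.orderIsoOfFin h i).2

lemma image_enum (U : Finset (Fin n)) (h : U.card = p) :
    Finset.image (enum U h) Finset.univ = U := by
  apply Finset.eq_of_subset_of_card_le
  · intro x hx
    simp only [Finset.mem_image] at hx
    obtain ⟨i, _, rfl⟩ := hx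
    exact enum_mem U h i
  · rw [h, Finset.card_image_of_injective _ (enum_injective U h), Finset.card_univ,
      Fintype.card_fin]

lemma glMinor_eq (g : Matrix (Fin n) (Fin n) ℝ) (S T : Finset (Fin n))
    (hS : S.card = p) (hT : T.card = p) :
    glMinor g S T = Matrix.det (Matrix.of fun i j : Fin p =>
      g (enum S hS i) (enum T hT j)) := by
  subst hS
  rw [glMinor, dif_pos hT]
  rfl

lemma glMinor_eq_zero (g : Matrix (Fin n) (Fin n) ℝ) (S T : Finset (Fin n))
    (h : T.card ≠ S.card) : glMinor g S T = 0 := by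
  rw [glMinor, dif_neg h]

end CMB

namespace CMB
variable {n p : ℕ}
open Finset

lemma image_enum_comp (U : Finset (Fin n)) (hU : U.card = p) (σ : Equiv.Perm (Fin p)) :
    Finset.univ.image (enum U hU ∘ σ) = U := by
  rw [← Finset.image_image]
  have h1 : Finset.univ.image (⇑σ) = Finset.univ := by
    ext x; simp [σ.surjective x]
  rw [h1, image_enum]

/-- Cauchy–Binet for glMinor. -/
theorem glMinor_mul (a b : Matrix (Fin n) (Fin n) ℝ) (S T : Finset (Fin n))
    (hS : S.card = p) (hT : T.card = p) :
    glMinor (a * b) S T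
      = ∑ U ∈ Finset.univ.powersetCard p, glMinor a S U * glMinor b U T := by
  have hpn : p ≤ n := by
    subst hS; simpa using S.card_le_univ.trans_eq (by simp)
  set s := enum S hS with hs
  set t := enum T hT with ht
  set c : (Fin p → Fin n) → ℝ := fun r =>
    (∏ i, a (s i) (r i)) * Matrix.det (Matrix.of fun i j => b (r i) (t j)) with hc
  -- Step 1: expand by multilinearity
  have step1 : glMinor (a * b) S T = ∑ r : Fin p → Fin n, c r := by
    rw [glMinor_eq (a * b) S T hS hT]
    calc Matrix.det (Matrix.of fun i j : Fin p => (a * b) (s i) (t j))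
        = (Matrix.detRowAlternating (R := ℝ) (n := Fin p)).toMultilinearMap
            (fun i => ∑ l : Fin n, a (s i) l • (fun j => b l (t j))) := by
          congr 1
          funext i j
          simp [Matrix.mul_apply, Finset.sum_apply]
      _ = ∑ r : Fin p → Fin n, (Matrix.detRowAlternating (R := ℝ) (n := Fin p)).toMultilinearMap
            (fun i => a (s i) (r i) • (fun j => b (r i) (t j))) :=
          MultilinearMap.map_sum _ _
      _ = ∑ r : Fin p → Fin n, c r := by
          refine Finset.sum_congr rfl fun r _ => ?_
          rw [MultilinearMap.map_smul_univ]
          rw [hc]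
          simp only [smul_eq_mul]
          rfl
  -- Step 2: kill non-injective r
  have step2 : ∑ r : Fin p → Fin n, c r
      = ∑ r ∈ Finset.univ.filter (fun r : Fin p → Fin n => Function.Injective r), c r := by
    symm
    apply Finset.sum_subset (Finset.filter_subset _ _)
    intro r _ hr
    simp only [Finset.mem_filter, Finset.mem_univ, true_and] at hr
    rw [Function.Injective] at hr
    push_neg at hr
    obtain ⟨i, j, hij, hne⟩ := hr
    have : Matrix.det (Matrix.of fun i j => b (r i) (t j)) = 0 :=
      Matrix.det_zero_of_row_eq hne (by funext k; simp [hij])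
    simp [hc, this]
  -- the reindexing map
  set toFun : Finset (Fin n) × Equiv.Perm (Fin p) → (Fin p → Fin n) := fun x =>
    if h : x.1.card = p then enum x.1 h ∘ x.2 else fun i => Fin.castLE hpn i with htoFun
  -- Step 3: reindex
  have step3 : ∑ r ∈ Finset.univ.filter (fun r : Fin p → Fin n => Function.Injective r), c r
      = ∑ x ∈ ((Finset.univ.powersetCard p : Finset (Finset (Fin n))) ×ˢ
          (Finset.univ : Finset (Equiv.Perm (Fin p)))), c (toFun x) := by
    symm
    refine Finset.sum_nbij toFun ?_ ?_ ?_ (fun _ _ => rfl)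
    · rintro ⟨U, π⟩ hx
      simp only [Finset.mem_product, Finset.mem_powersetCard_univ] at hx
      obtain ⟨hU, -⟩ := hx
      simp only [Finset.mem_filter, Finset.mem_univ, true_and, htoFun, dif_pos hU]
      exact (enum_injective U hU).comp π.injective
    · rintro ⟨U, π⟩ hx ⟨V, ρ⟩ hy hxy
      simp only [Finset.coe_product, Set.mem_prod, Finset.mem_coe,
        Finset.mem_powersetCard_univ, Finset.mem_univ, and_true] at hx hy
      simp only [htoFun, dif_pos hx, dif_pos hy] at hxy
      have hUV : U = V := by
        rw [← image_enum_comp U hx π, ← image_enum_comp V hy ρ, hxy]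
      subst hUV
      exact congrArg (Prod.mk U) (Equiv.ext fun i => enum_injective U hx (congrFun hxy i))
    · rintro r hr
      simp only [Finset.mem_coe, Finset.mem_filter, Finset.mem_univ, true_and] at hr
      have hcard : (Finset.univ.image r).card = p := by
        rw [Finset.card_image_of_injective _ hr, Finset.card_univ, Fintype.card_fin]
      have hmem : ∀ i, r i ∈ Finset.univ.image r := fun i => Finset.mem_image_of_mem r (Finset.mem_univ i)
      set π0 : Fin p → Fin p := fun i =>
        ((Finset.univ.image r).orderIsoOfFin hcard).symm ⟨r i, hmem i⟩ with hπ0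
      have hπ0inj : Function.Injective π0 := by
        intro i j hij
        apply hr
        have := congrArg (fun z => (((Finset.univ.image r).orderIsoOfFin hcard) z : Fin n)) hij
        simpa [hπ0] using this
      have hπ0bij : Function.Bijective π0 := (Finite.injective_iff_bijective).mp hπ0inj
      refine ⟨(Finset.univ.image r, Equiv.ofBijective π0 hπ0bij), ?_, ?_⟩
      · simp [Finset.mem_coe, Finset.mem_product, Finset.mem_powersetCard_univ, hcard]
      · simp only [htoFun, dif_pos hcard]
        funext i
        simp only [Function.comp_apply, Equiv.ofBijective_apply, hπ0, enum]
        rw [OrderIso.apply_symm_apply]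
  -- Step 4: evaluate the inner sum
  have step4 : ∑ x ∈ ((Finset.univ.powersetCard p : Finset (Finset (Fin n))) ×ˢ
          (Finset.univ : Finset (Equiv.Perm (Fin p)))), c (toFun x)
      = ∑ U ∈ Finset.univ.powersetCard p, glMinor a S U * glMinor b U T := by
    rw [Finset.sum_product]
    refine Finset.sum_congr rfl fun U hU => ?_
    rw [Finset.mem_powersetCard_univ] at hU
    have hdetb : ∀ π : Equiv.Perm (Fin p),
        Matrix.det (Matrix.of fun i j => b (enum U hU (π i)) (t j))
          = (Equiv.Perm.sign π : ℝ) * Matrix.det (Matrix.of fun i j => b (enum U hU i) (t j)) := by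
      intro π
      have := Matrix.det_permute π (Matrix.of fun i j : Fin p => b (enum U hU i) (t j))
      simpa [Matrix.submatrix] using this
    calc ∑ π : Equiv.Perm (Fin p), c (toFun (U, π))
        = (∑ π : Equiv.Perm (Fin p), (Equiv.Perm.sign π : ℝ) * ∏ i, a (s i) (enum U hU (π i)))
            * Matrix.det (Matrix.of fun i j => b (enum U hU i) (t j)) := by
          rw [Finset.sum_mul]
          refine Finset.sum_congr rfl fun π _ => ?_
          simp only [htoFun, dif_pos hU, hc, Function.comp_apply]
          rw [hdetb π]
          ring
      _ = Matrix.det (Matrix.of fun i j : Fin p => a (s i) (enum U hU j))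
            * Matrix.det (Matrix.of fun i j => b (enum U hU i) (t j)) := by
          congr 1
          rw [← Matrix.det_transpose (Matrix.of fun i j : Fin p => a (s i) (enum U hU j)),
            Matrix.det_apply']
          rfl
      _ = glMinor a S U * glMinor b U T := by
          rw [glMinor_eq a S U hS hU, glMinor_eq b U T hU hT]
  rw [step1, step2, step3, step4]

end CMB

namespace CMB
variable {n p : ℕ}
open Finset Matrix

/-- sign vector from a boolean vector -/
def sv (v : Fin n → Bool) : Fin n → ℝ := fun i => if v i then 1 else -1

lemma sv_sq (v : Fin n → Bool) (i : Fin n) : sv v i * sv v i = 1 := by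
  unfold sv; split <;> norm_num

/-- signed permutation matrix -/
def spMat (σ : Equiv.Perm (Fin n)) (v : Fin n → Bool) : Matrix (Fin n) (Fin n) ℝ :=
  Matrix.of fun i j => if σ j = i then sv v j else 0

lemma spMat_mul_transpose (σ : Equiv.Perm (Fin n)) (v : Fin n → Bool) :
    spMat σ v * (spMat σ v)ᵀ = 1 := by
  ext i j
  simp only [Matrix.mul_apply, spMat, Matrix.transpose_apply, Matrix.of_apply]
  rcases eq_or_ne i j with rfl | hij
  · rw [Finset.sum_eq_single (σ.symm i)]
    · simp [Equiv.apply_symm_apply, sv_sq]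
    · intro l _ hl
      have : σ l ≠ i := fun hc => hl (by rw [← hc]; simp)
      simp [this]
    · simp
  · rw [Finset.sum_eq_zero, Matrix.one_apply_ne hij]
    intro l _
    rcases eq_or_ne (σ l) i with hi | hi
    · have : σ l ≠ j := fun hc => hij (hi ▸ hc ▸ rfl)
      simp [this]
    · simp [hi]

lemma spMat_mem_orthogonal (σ : Equiv.Perm (Fin n)) (v : Fin n → Bool) :
    spMat σ v ∈ Matrix.orthogonalGroup (Fin n) ℝ := by
  rw [Matrix.mem_orthogonalGroup_iff]
  simpa [Matrix.star_eq_conjTranspose] using spMat_mul_transpose σ v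

lemma spMat_inv (σ : Equiv.Perm (Fin n)) (v : Fin n → Bool) :
    (spMat σ v)⁻¹ = (spMat σ v)ᵀ :=
  Matrix.inv_eq_right_inv (spMat_mul_transpose σ v)

lemma spMat_transpose_mem_orthogonal (σ : Equiv.Perm (Fin n)) (v : Fin n → Bool) :
    (spMat σ v)ᵀ ∈ Matrix.orthogonalGroup (Fin n) ℝ := by
  rw [Matrix.mem_orthogonalGroup_iff]
  have h := spMat_mul_transpose σ v
  have h2 : (spMat σ v)ᵀ * spMat σ v = 1 := by
    have := mul_eq_one_comm.mp h
    exact this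
  simpa [Matrix.star_eq_conjTranspose] using h2

lemma abs_det_spMat (σ : Equiv.Perm (Fin n)) (v : Fin n → Bool) :
    |(spMat σ v).det| = 1 := by
  have h := spMat_mul_transpose σ v
  have := congrArg Matrix.det h
  rw [Matrix.det_mul, Matrix.det_transpose, Matrix.det_one] at this
  have habs := congrArg abs this
  rw [abs_mul, abs_one] at habs
  nlinarith [abs_nonneg (spMat σ v).det]

lemma mul_spMat_apply (a : Matrix (Fin n) (Fin n) ℝ) (σ : Equiv.Perm (Fin n))
    (v : Fin n → Bool) (i j : Fin n) :
    (a * spMat σ v) i j = sv v j * a i (σ j) := by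
  simp only [Matrix.mul_apply, spMat, Matrix.of_apply]
  rw [Finset.sum_eq_single (σ j)]
  · simp [mul_comm]
  · intro l _ hl; simp [Ne.symm hl]
  · simp

lemma spMat_transpose_mul_apply (b : Matrix (Fin n) (Fin n) ℝ) (σ : Equiv.Perm (Fin n))
    (v : Fin n → Bool) (i j : Fin n) :
    ((spMat σ v)ᵀ * b) i j = sv v i * b (σ i) j := by
  simp only [Matrix.mul_apply, spMat, Matrix.transpose_apply, Matrix.of_apply]
  rw [Finset.sum_eq_single (σ i)]
  · simp
  · intro l _ hl; simp [Ne.symm hl]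
  · simp

/-- card of image under permutation -/
lemma card_image_perm (σ : Equiv.Perm (Fin n)) (T : Finset (Fin n)) (hT : T.card = p) :
    (T.image σ).card = p := by
  rw [Finset.card_image_of_injective _ σ.injective, hT]

/-- the permutation of `Fin p` induced by `σ` on the enumeration of `T`. -/
noncomputable def permOf (σ : Equiv.Perm (Fin n)) (T : Finset (Fin n)) (hT : T.card = p) :
    Equiv.Perm (Fin p) :=
  Equiv.ofBijective
    (fun j => ((T.image σ).orderIsoOfFin (card_image_perm σ T hT)).symm
      ⟨σ (enum T hT j), Finset.mem_image_of_mem σ (enum_mem T hT j)⟩)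
    (Finite.injective_iff_bijective.mp (by
      intro i j hij
      have := congrArg (fun z => (((T.image σ).orderIsoOfFin (card_image_perm σ T hT)) z : Fin n)) hij
      simp only [OrderIso.apply_symm_apply] at this
      exact enum_injective T hT (σ.injective this)))

lemma enum_permOf (σ : Equiv.Perm (Fin n)) (T : Finset (Fin n)) (hT : T.card = p) (j : Fin p) :
    enum (T.image σ) (card_image_perm σ T hT) (permOf σ T hT j) = σ (enum T hT j) := by
  simp only [permOf, Equiv.ofBijective_apply, enum]
  rw [OrderIso.apply_symm_apply]

/-- product over enumeration equals product over the finset -/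
lemma prod_enum (T : Finset (Fin n)) (hT : T.card = p) (f : Fin n → ℝ) :
    ∏ j : Fin p, f (enum T hT j) = ∏ x ∈ T, f x := by
  refine Finset.prod_nbij (enum T hT) (fun j _ => enum_mem T hT j) ?_ ?_ (fun _ _ => rfl)
  · exact fun i _ j _ hij => enum_injective T hT hij
  · intro x hx
    simp only [Finset.mem_coe] at hx
    have : x ∈ Finset.univ.image (enum T hT) := by rw [image_enum T hT]; exact hx
    simp only [Finset.mem_image] at this
    obtain ⟨j, _, rfl⟩ := this
    exact ⟨j, by simp⟩

/-- column transformation of a minor under a signed permutation -/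
lemma glMinor_mul_spMat (a : Matrix (Fin n) (Fin n) ℝ) (σ : Equiv.Perm (Fin n))
    (v : Fin n → Bool) (S T : Finset (Fin n)) (hS : S.card = p) (hT : T.card = p) :
    glMinor (a * spMat σ v) S T
      = (∏ x ∈ T, sv v x) * ((Equiv.Perm.sign (permOf σ T hT) : ℤ) : ℝ)
          * glMinor a S (T.image σ) := by
  rw [glMinor_eq (a * spMat σ v) S T hS hT,
    glMinor_eq a S (T.image σ) hS (card_image_perm σ T hT)]
  have h1 : (Matrix.of fun i j : Fin p => (a * spMat σ v) (enum S hS i) (enum T hT j))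
      = Matrix.of fun i j : Fin p => (sv v (enum T hT j))
          * ((Matrix.of fun i j : Fin p => a (enum S hS i)
              (enum (T.image σ) (card_image_perm σ T hT) j)).submatrix id (permOf σ T hT)) i j := by
    ext i j
    simp only [Matrix.of_apply, Matrix.submatrix_apply, id]
    rw [mul_spMat_apply, ← enum_permOf σ T hT j]
  rw [h1, Matrix.det_mul_row, prod_enum T hT, Matrix.det_permute']
  ring

/-- row transformation of a minor under a signed permutation -/
lemma glMinor_spMat_mul (b : Matrix (Fin n) (Fin n) ℝ) (σ : Equiv.Perm (Fin n))
    (v : Fin n → Bool) (S T : Finset (Fin n)) (hS : S.card = p) (hT : T.card = p) :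
    glMinor ((spMat σ v)ᵀ * b) S T
      = (∏ x ∈ S, sv v x) * ((Equiv.Perm.sign (permOf σ S hS) : ℤ) : ℝ)
          * glMinor b (S.image σ) T := by
  rw [glMinor_eq ((spMat σ v)ᵀ * b) S T hS hT,
    glMinor_eq b (S.image σ) T (card_image_perm σ S hS) hT]
  have h1 : (Matrix.of fun i j : Fin p => ((spMat σ v)ᵀ * b) (enum S hS i) (enum T hT j))
      = Matrix.of fun i j : Fin p => (sv v (enum S hS i))
          * ((Matrix.of fun i j : Fin p => b (enum (S.image σ) (card_image_perm σ S hS) i)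
              (enum T hT j)).submatrix (permOf σ S hS) id) i j := by
    ext i j
    simp only [Matrix.of_apply, Matrix.submatrix_apply, id]
    rw [spMat_transpose_mul_apply, ← enum_permOf σ S hS i]
  rw [h1, Matrix.det_mul_column, prod_enum S hS, Matrix.det_permute]
  ring

end CMB

namespace CMB
variable {n p : ℕ}
open Finset Matrix

/-- the sign sum: `∑_ε (∏_{T} ε)(∏_{S} ε) = 2^n [T = S]` -/
lemma sum_sv (T S : Finset (Fin n)) :
    ∑ v : Fin n → Bool, (∏ x ∈ T, sv v x) * (∏ x ∈ S, sv v x)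
      = if T = S then (2 : ℝ) ^ n else 0 := by
  have key : ∀ v : Fin n → Bool, (∏ x ∈ T, sv v x) * (∏ x ∈ S, sv v x)
      = ∏ x : Fin n, ((if x ∈ T then sv v x else 1) * (if x ∈ S then sv v x else 1)) := by
    intro v
    rw [Finset.prod_mul_distrib]
    congr 1
    · rw [Finset.prod_ite_mem, Finset.univ_inter]
    · rw [Finset.prod_ite_mem, Finset.univ_inter]
  simp only [key]
  have swap : ∑ v : Fin n → Bool, ∏ x : Fin n,
        ((if x ∈ T then sv v x else 1) * (if x ∈ S then sv v x else 1))
      = ∏ x : Fin n, ∑ t : Bool,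
        ((if x ∈ T then (if t then (1:ℝ) else -1) else 1) * (if x ∈ S then (if t then (1:ℝ) else -1) else 1)) := by
    rw [Finset.prod_univ_sum]
    rw [Fintype.piFinset_univ]
    rfl
  rw [swap]
  by_cases hTS : T = S
  · subst hTS
    rw [if_pos rfl]
    have : ∀ x : Fin n, (∑ t : Bool,
        ((if x ∈ T then (if t then (1:ℝ) else -1) else 1) * (if x ∈ T then (if t then (1:ℝ) else -1) else 1))) = 2 := by
      intro x
      by_cases hx : x ∈ T <;> simp [hx, Fintype.sum_bool] <;> norm_num
    rw [Finset.prod_congr rfl fun x _ => this x]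
    simp
  · rw [if_neg hTS]
    have : ∃ x, (x ∈ T ∧ x ∉ S) ∨ (x ∈ S ∧ x ∉ T) := by
      by_contra hc
      push_neg at hc
      exact hTS (Finset.ext fun x => ⟨(hc x).1, (hc x).2⟩)
    obtain ⟨x₀, hx₀⟩ := this
    apply Finset.prod_eq_zero (Finset.mem_univ x₀)
    rcases hx₀ with ⟨h1, h2⟩ | ⟨h1, h2⟩ <;>
      simp [h1, h2, Fintype.sum_bool] <;> norm_num

/-- every `p`-subset is hit by the image map, with fibers of equal size -/
lemma exists_perm_image (U V : Finset (Fin n)) (hcard : U.card = V.card) :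
    ∃ τ : Equiv.Perm (Fin n), U.image τ = V := by
  classical
  have hcard' : Uᶜ.card = Vᶜ.card := by
    rw [Finset.card_compl, Finset.card_compl, hcard]
  let e1 : {x // x ∈ U} ≃ {x // x ∈ V} := Finset.equivOfCardEq hcard
  let e2 : {x // ¬ x ∈ U} ≃ {x // ¬ x ∈ V} :=
    (Equiv.subtypeEquivRight fun x => (Finset.mem_compl).symm).trans
      ((Finset.equivOfCardEq hcard').trans
        (Equiv.subtypeEquivRight fun x => Finset.mem_compl))
  have hleft : ∀ (x : Fin n) (hx : x ∈ U), Equiv.subtypeCongr e1 e2 x = (e1 ⟨x, hx⟩ : Fin n) := by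
    intro x hx
    simp [Equiv.subtypeCongr, hx]
  refine ⟨Equiv.subtypeCongr e1 e2, ?_⟩
  ext y
  simp only [Finset.mem_image]
  constructor
  · rintro ⟨x, hx, rfl⟩
    rw [hleft x hx]
    exact (e1 ⟨x, hx⟩).2
  · intro hy
    refine ⟨(e1.symm ⟨y, hy⟩ : Fin n), (e1.symm ⟨y, hy⟩).2, ?_⟩
    rw [hleft _ (e1.symm ⟨y, hy⟩).2]
    have : (⟨((e1.symm ⟨y, hy⟩ : {x // x ∈ U}) : Fin n), (e1.symm ⟨y, hy⟩).2⟩ : {x // x ∈ U})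
        = e1.symm ⟨y, hy⟩ := Subtype.coe_eta _ _
    rw [this, Equiv.apply_symm_apply]

end CMB

namespace CMB
variable {n p : ℕ}
open Finset Matrix

/-- fiber count of the image map -/
noncomputable def nfib (T U : Finset (Fin n)) : ℕ :=
  (Finset.univ.filter fun σ : Equiv.Perm (Fin n) => T.image σ = U).card

lemma nfib_const (T U V : Finset (Fin n)) (hU : U.card = V.card) :
    nfib T U = nfib T V := by
  obtain ⟨τ, hτ⟩ := exists_perm_image U V hU
  unfold nfib
  have himg : ∀ (ρ σ : Equiv.Perm (Fin n)), T.image ⇑(ρ * σ) = (T.image ⇑σ).image ⇑ρ := by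
    intro ρ σ; rw [Finset.image_image]; rfl
  refine Finset.card_bij' (fun σ _ => τ * σ) (fun σ _ => τ⁻¹ * σ) ?_ ?_ ?_ ?_
  · intro σ hσ
    simp only [Finset.mem_filter, Finset.mem_univ, true_and] at hσ ⊢
    rw [himg, hσ, hτ]
  · intro σ hσ
    simp only [Finset.mem_filter, Finset.mem_univ, true_and] at hσ ⊢
    rw [himg, hσ, ← hτ, Finset.image_image]
    ext x
    simp
  · intro σ _; group
  · intro σ _; group

lemma image_perm_mem (T : Finset (Fin n)) (hT : T.card = p) (σ : Equiv.Perm (Fin n)) :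
    T.image σ ∈ Finset.univ.powersetCard p :=
  Finset.mem_powersetCard_univ.mpr (card_image_perm σ T hT)

lemma sum_nfib (T : Finset (Fin n)) (hT : T.card = p) :
    ∑ U ∈ Finset.univ.powersetCard p, nfib T U = Nat.factorial n := by
  have := Finset.card_eq_sum_card_fiberwise
    (f := fun σ : Equiv.Perm (Fin n) => T.image σ) (s := Finset.univ)
    (t := Finset.univ.powersetCard p) (fun σ _ => image_perm_mem T hT σ)
  rw [Finset.card_univ, Fintype.card_perm, Fintype.card_fin] at this
  simpa [nfib] using this.symm

lemma nfib_mul_choose (T : Finset (Fin n)) (hT : T.card = p) :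
    nfib T T * n.choose p = Nat.factorial n := by
  have h1 := sum_nfib T hT
  have h2 : ∀ U ∈ Finset.univ.powersetCard p, nfib T U = nfib T T := by
    intro U hU
    exact nfib_const T U T (by rw [Finset.mem_powersetCard_univ.mp hU, hT])
  rw [Finset.sum_congr rfl h2, Finset.sum_const, smul_eq_mul] at h1
  rw [← h1, Finset.card_powersetCard, Finset.card_univ, Fintype.card_fin, mul_comm]

lemma sum_perm_image (T : Finset (Fin n)) (hT : T.card = p) (f : Finset (Fin n) → ℝ) :
    ∑ σ : Equiv.Perm (Fin n), f (T.image σ)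
      = (nfib T T : ℝ) * ∑ U ∈ Finset.univ.powersetCard p, f U := by
  rw [Finset.sum_comp f (fun σ : Equiv.Perm (Fin n) => T.image σ)]
  have himg : Finset.univ.image (fun σ : Equiv.Perm (Fin n) => T.image σ)
      = Finset.univ.powersetCard p := by
    apply Finset.Subset.antisymm
    · intro U hU
      simp only [Finset.mem_image] at hU
      obtain ⟨σ, _, rfl⟩ := hU
      exact image_perm_mem T hT σ
    · intro U hU
      obtain ⟨τ, hτ⟩ := exists_perm_image T U
        (by rw [hT, Finset.mem_powersetCard_univ.mp hU])
      exact Finset.mem_image.mpr ⟨τ, Finset.mem_univ τ, hτ⟩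
  rw [himg, Finset.mul_sum]
  refine Finset.sum_congr rfl fun U hU => ?_
  rw [nsmul_eq_mul]
  congr 2
  exact nfib_const T U T (by rw [Finset.mem_powersetCard_univ.mp hU, hT])

/-- THE CORE ALGEBRAIC IDENTITY -/
theorem core_identity (a b : Matrix (Fin n) (Fin n) ℝ) (S₁ T₁ S₂ T₂ : Finset (Fin n))
    (h1 : S₁.card = T₁.card) (h2 : S₂.card = T₂.card) :
    ∑ σ : Equiv.Perm (Fin n), ∑ v : Fin n → Bool,
        glMinor (a * spMat σ v) S₁ T₁ * glMinor ((spMat σ v)ᵀ * b) S₂ T₂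
      = (if T₁ = S₂ then ((2:ℝ)^n * (Nat.factorial n : ℝ) / (n.choose T₁.card : ℝ)) else 0)
          * glMinor (a * b) S₁ T₂ := by
  by_cases hTS : T₁ = S₂
  case neg =>
    rw [if_neg hTS, zero_mul]
    refine Finset.sum_eq_zero fun σ _ => ?_
    have expand : ∀ v : Fin n → Bool,
        glMinor (a * spMat σ v) S₁ T₁ * glMinor ((spMat σ v)ᵀ * b) S₂ T₂
          = ((∏ x ∈ T₁, sv v x) * (∏ x ∈ S₂, sv v x)) *
            (((Equiv.Perm.sign (permOf σ T₁ h1.symm) : ℤ) : ℝ) * glMinor a S₁ (T₁.image σ)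
              * (((Equiv.Perm.sign (permOf σ S₂ rfl) : ℤ) : ℝ) * glMinor b (S₂.image σ) T₂)) := by
      intro v
      rw [glMinor_mul_spMat a σ v S₁ T₁ rfl h1.symm,
        glMinor_spMat_mul b σ v S₂ T₂ rfl h2.symm]
      ring
    rw [Finset.sum_congr rfl fun v _ => expand v, ← Finset.sum_mul, sum_sv, if_neg hTS,
      zero_mul]
  case pos =>
    subst hTS
    set T := T₁
    set p := T.card with hp
    rw [if_pos rfl]
    have expand : ∀ (σ : Equiv.Perm (Fin n)) (v : Fin n → Bool),
        glMinor (a * spMat σ v) S₁ T * glMinor ((spMat σ v)ᵀ * b) T T₂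
          = ((∏ x ∈ T, sv v x) * (∏ x ∈ T, sv v x)) *
            ((((Equiv.Perm.sign (permOf σ T rfl) : ℤ) : ℝ)
              * ((Equiv.Perm.sign (permOf σ T rfl) : ℤ) : ℝ))
              * (glMinor a S₁ (T.image σ) * glMinor b (T.image σ) T₂)) := by
      intro σ v
      rw [glMinor_mul_spMat a σ v S₁ T h1 rfl,
        glMinor_spMat_mul b σ v T T₂ rfl h2.symm]
      ring
    have signsq : ∀ σ : Equiv.Perm (Fin n),
        (((Equiv.Perm.sign (permOf σ T rfl) : ℤ) : ℝ)
          * ((Equiv.Perm.sign (permOf σ T rfl) : ℤ) : ℝ)) = 1 := by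
      intro σ
      rcases Int.units_eq_one_or (Equiv.Perm.sign (permOf σ T rfl)) with h | h <;>
        rw [h] <;> norm_num
    calc ∑ σ : Equiv.Perm (Fin n), ∑ v : Fin n → Bool,
          glMinor (a * spMat σ v) S₁ T * glMinor ((spMat σ v)ᵀ * b) T T₂
        = ∑ σ : Equiv.Perm (Fin n), (2:ℝ)^n *
            (glMinor a S₁ (T.image σ) * glMinor b (T.image σ) T₂) := by
          refine Finset.sum_congr rfl fun σ _ => ?_
          rw [Finset.sum_congr rfl fun v _ => expand σ v, ← Finset.sum_mul, sum_sv, if_pos rfl,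
            signsq σ, one_mul]
      _ = (2:ℝ)^n * ((nfib T T : ℝ) *
            ∑ U ∈ Finset.univ.powersetCard p, glMinor a S₁ U * glMinor b U T₂) := by
          rw [← Finset.mul_sum, sum_perm_image T rfl
            (fun U => glMinor a S₁ U * glMinor b U T₂)]
      _ = ((2:ℝ)^n * (Nat.factorial n : ℝ) / (n.choose p : ℝ)) * glMinor (a * b) S₁ T₂ := by
          rw [← glMinor_mul a b S₁ T₂ h1 h2.symm]
          have hC : (n.choose p : ℝ) ≠ 0 := by
            have hpn : p ≤ n := by
              have := T.card_le_univ
              simpa [hp] using this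
            have := Nat.choose_pos hpn
            positivity
          have hnf : (nfib T T : ℝ) * (n.choose p : ℝ) = (Nat.factorial n : ℝ) := by
            exact_mod_cast nfib_mul_choose T rfl
          rw [div_mul_eq_mul_div, eq_div_iff hC, ← hnf]
          ring

end CMB


namespace CMB
variable {n : ℕ}
open Matrix

instance : BorelSpace (Matrix (Fin n) (Fin n) ℝ) :=
  inferInstanceAs (BorelSpace (Fin n → Fin n → ℝ))

lemma continuous_mul_right (k : Matrix (Fin n) (Fin n) ℝ) :
    Continuous (fun g : Matrix (Fin n) (Fin n) ℝ => g * k) :=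
  continuous_id.matrix_mul continuous_const

lemma measurable_det : Measurable (fun g : Matrix (Fin n) (Fin n) ℝ => g.det) :=
  (continuous_id.matrix_det).measurable

lemma measurable_w :
    Measurable (fun g : Matrix (Fin n) (Fin n) ℝ => ENNReal.ofReal ((|g.det| ^ n)⁻¹)) :=
  ENNReal.measurable_ofReal.comp ((measurable_det.abs.pow_const n).inv)

/-- right multiplication by a matrix of |det| = 1 preserves Lebesgue measure -/
lemma volume_preserving_mul_right (k : Matrix (Fin n) (Fin n) ℝ) (hk : |k.det| = 1) :
    MeasurePreserving (fun g : Matrix (Fin n) (Fin n) ℝ => g * k) volume volume := by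
  have hdet : k.det ≠ 0 := fun hc => by rw [hc] at hk; simp at hk
  have hrow : MeasurePreserving (fun v : Fin n → ℝ => Matrix.vecMul v k) volume volume := by
    have hld : LinearMap.det (Matrix.toLin' kᵀ) ≠ 0 := by
      rw [LinearMap.det_toLin', Matrix.det_transpose]; exact hdet
    have hmap := Measure.map_linearMap_addHaar_eq_smul_addHaar
      (volume : Measure (Fin n → ℝ)) hld
    have hcoe : ⇑(Matrix.toLin' kᵀ) = fun v : Fin n → ℝ => Matrix.vecMul v k := by
      funext v
      rw [Matrix.toLin'_apply, Matrix.mulVec_transpose]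
    rw [hcoe] at hmap
    refine ⟨?_, ?_⟩
    · rw [← hcoe]
      exact (LinearMap.continuous_of_finiteDimensional (Matrix.toLin' kᵀ)).measurable
    · rw [hmap, LinearMap.det_toLin', Matrix.det_transpose]
      rw [abs_inv, hk]
      norm_num
  have hpi := MeasureTheory.measurePreserving_pi
    (fun _ : Fin n => (volume : Measure (Fin n → ℝ)))
    (fun _ : Fin n => (volume : Measure (Fin n → ℝ))) (fun _ => hrow)
  have heq : (fun (a : Fin n → Fin n → ℝ) (i : Fin n) => Matrix.vecMul (a i) k)
      = (fun g : Matrix (Fin n) (Fin n) ℝ => g * k) := by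
    funext g i j
    simp [Matrix.mul_apply, Matrix.vecMul, dotProduct]
    exact (Matrix.mul_apply (M := g) (N := k)).symm
  rw [heq] at hpi
  have hvol : (volume : Measure (Fin n → Fin n → ℝ))
      = Measure.pi (fun _ : Fin n => (volume : Measure (Fin n → ℝ))) := by
    rw [MeasureTheory.volume_pi]
  exact ⟨hpi.measurable, by rw [show (volume : Measure (Matrix (Fin n) (Fin n) ℝ)) = Measure.pi (fun _ : Fin n => (volume : Measure (Fin n → ℝ))) from hvol]; exact hpi.map_eq⟩

/-- right multiplication by a matrix of |det| = 1 preserves the Haar measure -/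
lemma haar_preserving_mul_right (k : Matrix (Fin n) (Fin n) ℝ) (hk : |k.det| = 1) :
    MeasurePreserving (fun g : Matrix (Fin n) (Fin n) ℝ => g * k) (haarGL n) (haarGL n) := by
  set w : Matrix (Fin n) (Fin n) ℝ → ENNReal :=
    fun g => ENNReal.ofReal ((|g.det| ^ n)⁻¹) with hw
  have hvolp := volume_preserving_mul_right k hk
  have hwT : (fun g => w (g * k)) = w := by
    funext g
    simp only [hw, Matrix.det_mul, abs_mul, hk, mul_one]
  refine ⟨hvolp.measurable, ?_⟩
  apply Measure.ext
  intro s hs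
  rw [Measure.map_apply hvolp.measurable hs]
  rw [haarGL, withDensity_apply _ (hs.preimage hvolp.measurable), withDensity_apply _ hs]
  calc ∫⁻ x in (fun g => g * k) ⁻¹' s, w x ∂volume
      = ∫⁻ x in (fun g => g * k) ⁻¹' s, w (x * k) ∂volume := by rw [hwT]
    _ = ∫⁻ y in s, w y ∂(Measure.map (fun g => g * k) volume) :=
        (MeasureTheory.setLIntegral_map hs measurable_w hvolp.measurable).symm
    _ = ∫⁻ y in s, w y ∂volume := by rw [hvolp.map_eq]

/-- a.e. every matrix is invertible for haarGL, n ≥ 1 -/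
lemma ae_isUnit (hn : 1 ≤ n) : ∀ᵐ g ∂(haarGL n), IsUnit (Matrix.det g) := by
  rw [Filter.eventually_iff, mem_ae_iff]
  have hset : {g : Matrix (Fin n) (Fin n) ℝ | IsUnit g.det}ᶜ
      = (fun g : Matrix (Fin n) (Fin n) ℝ => g.det) ⁻¹' {0} := by
    ext g
    simp [isUnit_iff_ne_zero]
  rw [hset, haarGL, withDensity_apply _ (measurable_det (measurableSet_singleton 0))]
  have hz : ∀ g ∈ (fun g : Matrix (Fin n) (Fin n) ℝ => g.det) ⁻¹' {0},
      ENNReal.ofReal ((|g.det| ^ n)⁻¹) = (0 : ENNReal) := by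
    intro g hg
    simp only [Set.mem_preimage, Set.mem_singleton_iff] at hg
    have h0 : |g.det| ^ n = 0 := by
      rw [hg, abs_zero]
      exact zero_pow (by omega)
    simp [h0]
  rw [MeasureTheory.setLIntegral_congr_fun (measurable_det (measurableSet_singleton 0))
    (show Set.EqOn _ (fun _ => (0 : ENNReal)) _ from hz), lintegral_zero]

/-- the measurable equiv given by right multiplication -/
noncomputable def mulRightEquiv (k : Matrix (Fin n) (Fin n) ℝ) (hk : IsUnit k.det) :
    Matrix (Fin n) (Fin n) ℝ ≃ᵐ Matrix (Fin n) (Fin n) ℝ :=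
  Homeomorph.toMeasurableEquiv
    { toFun := fun g => g * k
      invFun := fun g => g * k⁻¹
      left_inv := fun g => by
        show g * k * k⁻¹ = g
        rw [Matrix.mul_nonsing_inv_cancel_right _ _ hk]
      right_inv := fun g => by
        show g * k⁻¹ * k = g
        rw [Matrix.nonsing_inv_mul_cancel_right _ _ hk]
      continuous_toFun := continuous_mul_right k
      continuous_invFun := continuous_mul_right k⁻¹ }

lemma mulRightEquiv_emb (k : Matrix (Fin n) (Fin n) ℝ) (hk : IsUnit k.det) :
    MeasurableEmbedding (fun g : Matrix (Fin n) (Fin n) ℝ => g * k) :=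
  (mulRightEquiv k hk).measurableEmbedding

end CMB


/-- for continuous `O(n)`-bi-invariant `F, G` on `GL_n(ℝ)` with absolutely
convergent integrals, and subsets `S₁, T₁, S₂, T₂` with `|S₁| = |T₁|`, `|S₂| = |T₂|`,
`∫ Δ_{S₁,T₁}(g) F(g) Δ_{S₂,T₂}(g⁻¹h) G(g⁻¹h) dμ(g)
  = ([T₁ = S₂]/binom(n,|T₁|)) Δ_{S₁,T₂}(h) ∫ F(g) G(g⁻¹h) dμ(g)`. -/
theorem convolution_minor_biinvariant
    (n : ℕ) (hn : 1 ≤ n)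
    (F G : Matrix (Fin n) (Fin n) ℝ → ℂ)
    (hFcont : ContinuousOn F {g | IsUnit g.det})
    (hGcont : ContinuousOn G {g | IsUnit g.det})
    (hFinv : ∀ k₁ k₂ : Matrix (Fin n) (Fin n) ℝ, k₁ ∈ Matrix.orthogonalGroup (Fin n) ℝ →
      k₂ ∈ Matrix.orthogonalGroup (Fin n) ℝ → ∀ g, F (k₁ * g * k₂) = F g)
    (hGinv : ∀ k₁ k₂ : Matrix (Fin n) (Fin n) ℝ, k₁ ∈ Matrix.orthogonalGroup (Fin n) ℝ →
      k₂ ∈ Matrix.orthogonalGroup (Fin n) ℝ → ∀ g, G (k₁ * g * k₂) = G g)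
    (S₁ T₁ S₂ T₂ : Finset (Fin n)) (hST₁ : S₁.card = T₁.card) (hST₂ : S₂.card = T₂.card)
    (hint₁ : ∀ h : Matrix (Fin n) (Fin n) ℝ, IsUnit h.det →
      Integrable (fun g => (glMinor g S₁ T₁ : ℂ) * F g
        * (glMinor (g⁻¹ * h) S₂ T₂ : ℂ) * G (g⁻¹ * h)) (haarGL n))
    (hint₂ : ∀ h : Matrix (Fin n) (Fin n) ℝ, IsUnit h.det →
      Integrable (fun g => F g * G (g⁻¹ * h)) (haarGL n))
    (h : Matrix (Fin n) (Fin n) ℝ) (hh : IsUnit h.det) :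
    ∫ g, (glMinor g S₁ T₁ : ℂ) * F g
        * (glMinor (g⁻¹ * h) S₂ T₂ : ℂ) * G (g⁻¹ * h) ∂(haarGL n)
      = ((if T₁ = S₂ then 1 else 0) / (n.choose T₁.card : ℂ)) * (glMinor h S₁ T₂ : ℂ)
          * ∫ g, F g * G (g⁻¹ * h) ∂(haarGL n) := by
  classical
  open CMB Matrix in
  set μ := haarGL n with hμ
  set f : Matrix (Fin n) (Fin n) ℝ → ℂ := fun g => (glMinor g S₁ T₁ : ℂ) * F g
      * (glMinor (g⁻¹ * h) S₂ T₂ : ℂ) * G (g⁻¹ * h) with hfdef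
  set fk : Equiv.Perm (Fin n) → (Fin n → Bool) → Matrix (Fin n) (Fin n) ℝ → ℂ :=
    fun σ v g => (glMinor (g * spMat σ v) S₁ T₁ : ℂ) * F g
      * (glMinor ((spMat σ v)ᵀ * (g⁻¹ * h)) S₂ T₂ : ℂ) * G (g⁻¹ * h) with hfkdef
  -- basic facts about k = spMat σ v
  have hkunit : ∀ (σ : Equiv.Perm (Fin n)) (v : Fin n → Bool), IsUnit (spMat σ v).det := by
    intro σ v
    rw [isUnit_iff_ne_zero]
    intro hc
    have := abs_det_spMat σ v
    rw [hc] at this; simp at this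
  -- f (g * k) = fk σ v g, for every g
  have hcomp : ∀ (σ : Equiv.Perm (Fin n)) (v : Fin n → Bool) (g : Matrix (Fin n) (Fin n) ℝ),
      f (g * spMat σ v) = fk σ v g := by
    intro σ v g
    have h1 : (g * spMat σ v)⁻¹ * h = (spMat σ v)ᵀ * (g⁻¹ * h) := by
      rw [Matrix.mul_inv_rev, spMat_inv, Matrix.mul_assoc]
    have h2 : F (g * spMat σ v) = F g := by
      have := hFinv 1 (spMat σ v) (Submonoid.one_mem _) (spMat_mem_orthogonal σ v) g
      rwa [one_mul] at this
    have h3 : G ((spMat σ v)ᵀ * (g⁻¹ * h)) = G (g⁻¹ * h) := by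
      have := hGinv ((spMat σ v)ᵀ) 1 (spMat_transpose_mem_orthogonal σ v)
        (Submonoid.one_mem _) (g⁻¹ * h)
      rwa [mul_one] at this
    simp only [hfdef, hfkdef, h1, h2, h3]
  -- each shifted integrand has the same integral and is integrable
  have hstep : ∀ (σ : Equiv.Perm (Fin n)) (v : Fin n → Bool),
      (∫ g, f g ∂μ) = ∫ g, fk σ v g ∂μ ∧ Integrable (fk σ v) μ := by
    intro σ v
    have hmp := haar_preserving_mul_right (spMat σ v) (abs_det_spMat σ v)
    have hemb := mulRightEquiv_emb (spMat σ v) (hkunit σ v)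
    constructor
    · rw [← hmp.integral_comp hemb f]
      exact integral_congr_ae (Filter.Eventually.of_forall fun g => hcomp σ v g)
    · have : Integrable (f ∘ fun g => g * spMat σ v) μ :=
        (hmp.integrable_comp_emb hemb).mpr (hint₁ h hh)
      exact this.congr (Filter.Eventually.of_forall fun g => hcomp σ v g)
  -- the constant from the core identity
  set C : ℝ := (if T₁ = S₂ then ((2:ℝ)^n * (Nat.factorial n : ℝ) / (n.choose T₁.card : ℝ))
    else 0) with hC
  -- pointwise identity on invertible matrices
  have hpoint : ∀ g : Matrix (Fin n) (Fin n) ℝ, IsUnit g.det →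
      (∑ σ : Equiv.Perm (Fin n), ∑ v : Fin n → Bool, fk σ v g)
        = ((C : ℂ) * (glMinor h S₁ T₂ : ℂ)) * (F g * G (g⁻¹ * h)) := by
    intro g hg
    have hterm : ∀ (σ : Equiv.Perm (Fin n)) (v : Fin n → Bool), fk σ v g
        = ((glMinor (g * spMat σ v) S₁ T₁ : ℝ) : ℂ)
            * ((glMinor ((spMat σ v)ᵀ * (g⁻¹ * h)) S₂ T₂ : ℝ) : ℂ)
          * (F g * G (g⁻¹ * h)) := by
      intro σ v
      simp only [hfkdef]
      push_cast
      ring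
    calc (∑ σ : Equiv.Perm (Fin n), ∑ v : Fin n → Bool, fk σ v g)
        = ((∑ σ : Equiv.Perm (Fin n), ∑ v : Fin n → Bool,
            (glMinor (g * spMat σ v) S₁ T₁
              * glMinor ((spMat σ v)ᵀ * (g⁻¹ * h)) S₂ T₂) : ℝ) : ℂ)
            * (F g * G (g⁻¹ * h)) := by
          simp only [hterm]
          push_cast
          try rw [Finset.sum_mul]
          try exact Finset.sum_congr rfl fun σ _ => by rw [Finset.sum_mul]
          try simp [Finset.sum_mul]
      _ = ((C : ℂ) * (glMinor h S₁ T₂ : ℂ)) * (F g * G (g⁻¹ * h)) := by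
          rw [core_identity g (g⁻¹ * h) S₁ T₁ S₂ T₂ hST₁ hST₂]
          try rw [Matrix.mul_nonsing_inv_cancel_left _ _ hg]
          try rw [Complex.ofReal_mul]
          try rw [← hC]
          try ring
  -- summing the integral identity
  set N : ℕ := Nat.factorial n * 2 ^ n with hN
  have hcards : ((Finset.univ : Finset (Equiv.Perm (Fin n))).card
      * (Finset.univ : Finset (Fin n → Bool)).card) = N := by
    rw [Finset.card_univ, Finset.card_univ, Fintype.card_perm, Fintype.card_fin,
      Fintype.card_fun, Fintype.card_bool, Fintype.card_fin, hN]
  have hmain : (N : ℂ) * ∫ g, f g ∂μ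
      = ((C : ℂ) * (glMinor h S₁ T₂ : ℂ)) * ∫ g, F g * G (g⁻¹ * h) ∂μ := by
    calc (N : ℂ) * ∫ g, f g ∂μ
        = ∑ σ : Equiv.Perm (Fin n), ∑ v : Fin n → Bool, ∫ g, fk σ v g ∂μ := by
          rw [Finset.sum_congr rfl fun σ _ => Finset.sum_congr rfl
            fun v _ => ((hstep σ v).1).symm]
          rw [Finset.sum_const, Finset.sum_const, smul_smul, ← hcards]
          push_cast [nsmul_eq_mul]
          ring
      _ = ∫ g, (∑ σ : Equiv.Perm (Fin n), ∑ v : Fin n → Bool, fk σ v g) ∂μ := by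
          rw [MeasureTheory.integral_finset_sum _ (fun σ _ =>
            MeasureTheory.integrable_finset_sum _ (fun v _ => (hstep σ v).2))]
          exact Finset.sum_congr rfl fun σ _ =>
            (MeasureTheory.integral_finset_sum _ (fun v _ => (hstep σ v).2)).symm
      _ = ∫ g, ((C : ℂ) * (glMinor h S₁ T₂ : ℂ)) * (F g * G (g⁻¹ * h)) ∂μ := by
          refine integral_congr_ae ?_
          filter_upwards [ae_isUnit hn] with g hg
          exact hpoint g hg
      _ = ((C : ℂ) * (glMinor h S₁ T₂ : ℂ)) * ∫ g, F g * G (g⁻¹ * h) ∂μ := by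
          rw [MeasureTheory.integral_const_mul]
  -- Solve for the integral
  have hNne : (N : ℂ) ≠ 0 := by
    rw [Nat.cast_ne_zero, hN]
    positivity
  have hchoosene : (n.choose T₁.card : ℂ) ≠ 0 := by
    rw [Nat.cast_ne_zero]
    have hTn : T₁.card ≤ n := by simpa using T₁.card_le_univ
    exact (Nat.choose_pos hTn).ne'
  by_cases hTS : T₁ = S₂
  · rw [if_pos hTS] at hC ⊢
    have h2 : (C : ℂ) = (2:ℂ)^n * (Nat.factorial n : ℂ) / (n.choose T₁.card : ℂ) := by
      rw [hC]; push_cast; ring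
    have hNc : (N : ℂ) = (Nat.factorial n : ℂ) * (2:ℂ)^n := by rw [hN]; push_cast; ring
    refine mul_left_cancel₀ hNne ?_
    rw [hmain, h2, hNc]
    ring
  · rw [if_neg hTS] at hC ⊢
    have h0 : (C : ℂ) = 0 := by rw [hC]; norm_num
    rw [h0, zero_mul, zero_mul] at hmain
    have := mul_eq_zero.mp hmain
    rcases this with hc | hc
    · exact absurd hc hNne
    · rw [hc]
      simp
end

section
/- Let ℓ ≥ 0, n = ℓ+1, c > 0, s ∈ ℂ with Re(s) > 0, and γ ∈ ℝ^n; set ρ_j = ℓ/2 + 1 − j for 1 ≤ j ≤ n. Then the eigenvalue of the spherical Hecke–Baxter operator on the spherical vector is the Archimedean L-factor; explicitly, the following iterated integral identity holds: 2^n (c/π)^{ℓ(ℓ+1)/4} ∫_{(0,∞)^n} [ Π_{j=1}^n a_j^{iγ_j − ρ_j − s − ℓ/2} ] · ( ∫_{ℝ^{ℓ(ℓ+1)/2}} exp( −c( Σ_{j=1}^n a_j^{−2} + Σ_{1≤j<i≤n} x_{ij}² a_j^{−2} ) ) Π_{1≤j<i≤n} dx_{ij} ) Π_{j=1}^n (da_j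 / a_j) = Π_{j=1}^n c^{−(s−iγ_j)/2} Γ((s−iγ_j)/2) = L(s,c|0,γ). Here a^z for a > 0 and z ∈ ℂ denotes the complex power e^{z·log a}, all integrals are with respect to Lebesgue measure, and the integrand is absolutely integrable. -/
open MeasureTheory

/-- The index set of the `ℓ(ℓ+1)/2` coordinates `x_{ij}`, `1 ≤ j < i ≤ n`, of the
unipotent subgroup `N ⊂ GL_n(ℝ)`: pairs `p = (i, j)` with `j < i`. -/
abbrev NPairs (n : ℕ) := {p : Fin n × Fin n // p.2 < p.1}

/-- The inner Gaussian integrand `exp(−c(Σ_j a_j⁻² + Σ_{j<i} x_{ij}² a_j⁻²))`. -/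
noncomputable def gaussIntegrand (n : ℕ) (c : ℝ) (a : Fin n → ℝ) (x : NPairs n → ℝ) : ℝ :=
  Real.exp (-c * ((∑ j, ((a j) ^ 2)⁻¹) + ∑ p : NPairs n, x p ^ 2 * ((a p.val.2) ^ 2)⁻¹))

namespace SHBAux

open Set Complex

lemma mellin_exp_eq (w : ℂ) (hw : 0 < w.re) :
    MellinConvergent (fun t : ℝ => (Real.exp (-t) : ℂ)) w ∧
    mellin (fun t : ℝ => (Real.exp (-t) : ℂ)) w = Complex.Gamma w := by
  constructor
  · refine (Complex.GammaIntegral_convergent hw).congr_fun (fun t ht => ?_) measurableSet_Ioi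
    simp [mul_comm]
  · rw [show mellin (fun t : ℝ => (Real.exp (-t) : ℂ)) w = Complex.GammaIntegral w by
      rw [Complex.GammaIntegral_eq_mellin]]
    exact (Complex.Gamma_eq_integral hw).symm

lemma lemA (c : ℝ) (hc : 0 < c) (z : ℂ) (hz : 0 < z.re) :
    IntegrableOn (fun t : ℝ => (t:ℂ)^(-z-1) * (Real.exp (-(c * ((t:ℝ)^2)⁻¹)) : ℂ)) (Set.Ioi 0)
    ∧ ∫ t in Set.Ioi (0:ℝ), (t:ℂ)^(-z-1) * (Real.exp (-(c * (t^2)⁻¹)) : ℂ)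
      = (1/2 : ℂ) * ((c:ℂ)^(-z/2) * Complex.Gamma (z/2)) := by
  have hw : 0 < (z/2).re := by
    rw [show z/2 = z * (1/2 : ℝ) by push_cast; ring, Complex.mul_re]
    simp; positivity
  set f0 : ℝ → ℂ := fun u => (Real.exp (-u) : ℂ) with hf0
  set f : ℝ → ℂ := fun y => (Real.exp (-(c * y)) : ℂ) with hf
  have hdiv : (-z) / ((-2:ℝ):ℂ) = z / 2 := by push_cast; ring
  have hfc : MellinConvergent f (z/2) := by
    have := (MellinConvergent.comp_mul_left (f := f0) (s := z/2) hc).mpr (mellin_exp_eq _ hw).1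
    simpa [hf, hf0] using this
  have hfm : mellin f (z/2) = (c:ℂ)^(-(z/2)) * Complex.Gamma (z/2) := by
    have := mellin_comp_mul_left f0 (z/2) hc
    simp only [hf0] at this
    rw [hf]
    simp only [smul_eq_mul] at this
    rw [show (fun y => (Real.exp (-(c * y)) : ℂ)) = fun t => f0 (c * t) by funext t; simp [hf0]]
    rw [this, (mellin_exp_eq _ hw).2]
  have hrpow : ∀ t ∈ Set.Ioi (0:ℝ), t ^ (-2:ℝ) = ((t:ℝ)^2)⁻¹ := by
    intro t ht
    rw [Real.rpow_neg (le_of_lt ht), show ((2:ℝ)) = ((2:ℕ):ℝ) by norm_num, Real.rpow_natCast]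
  have hconv2 : MellinConvergent (fun t : ℝ => f (t ^ (-2:ℝ))) (-z) := by
    rw [MellinConvergent.comp_rpow (by norm_num : (-2:ℝ) ≠ 0), hdiv]
    exact hfc
  have key : ∀ t ∈ Set.Ioi (0:ℝ),
      ((t:ℂ)^(-z-1) • f (t ^ (-2:ℝ)) : ℂ) = (t:ℂ)^(-z-1) * (Real.exp (-(c * (t^2)⁻¹)) : ℂ) := by
    intro t ht
    rw [smul_eq_mul, hrpow t ht]
  constructor
  · refine (hconv2.congr_fun (fun t ht => ?_) measurableSet_Ioi)
    exact (key t ht).symm ▸ rfl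
  · have : ∫ t in Set.Ioi (0:ℝ), (t:ℂ)^(-z-1) * (Real.exp (-(c * (t^2)⁻¹)) : ℂ)
        = mellin (fun t : ℝ => f (t ^ (-2:ℝ))) (-z) := by
      rw [mellin]
      refine setIntegral_congr_fun measurableSet_Ioi (fun t ht => ?_)
      exact (key t ht).symm
    rw [this, mellin_comp_rpow, hdiv, hfm,
      show |(-2:ℝ)|⁻¹ = (2⁻¹:ℝ) by norm_num, Complex.real_smul]
    push_cast
    rw [neg_div]
    ring

def npairsEquiv (n : ℕ) : NPairs n ≃ Σ j : Fin n, {i : Fin n // j < i} where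
  toFun p := ⟨p.1.2, ⟨p.1.1, p.2⟩⟩
  invFun q := ⟨(q.2.1, q.1), q.2.2⟩
  left_inv _ := rfl
  right_inv _ := rfl

lemma card_gt (n : ℕ) (j : Fin n) : Fintype.card {i : Fin n // j < i} = n - 1 - j := by
  rw [Fintype.card_congr (Equiv.subtypeEquivRight (fun i => (Set.mem_Ioi (b := j)).symm)),
    Fintype.card_Ioi, Fin.card_Ioi]

lemma prod_npairs {n : ℕ} {M : Type*} [CommMonoid M] (f : Fin n → M) :
    ∏ p : NPairs n, f p.val.2 = ∏ j : Fin n, f j ^ (n - 1 - (j:ℕ)) := by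
  rw [← Equiv.prod_comp (npairsEquiv n).symm (fun p => f p.val.2)]
  rw [← Finset.univ_sigma_univ, Finset.prod_sigma]
  exact Finset.prod_congr rfl fun j _ => by
    simp [npairsEquiv, Finset.prod_const, card_gt]

lemma card_npairs (ℓ : ℕ) : Fintype.card (NPairs (ℓ+1)) * 2 = ℓ * (ℓ+1) := by
  rw [Fintype.card_congr (npairsEquiv (ℓ+1)), Fintype.card_sigma]
  have : ∀ j : Fin (ℓ+1), Fintype.card {i : Fin (ℓ+1) // j < i} = ℓ - j := by
    intro j; rw [card_gt]; simp
  simp_rw [this]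
  rw [Fin.sum_univ_eq_sum_range (fun j => ℓ - j)]
  rw [show (∑ j ∈ Finset.range (ℓ+1), (ℓ - j)) = ∑ j ∈ Finset.range (ℓ+1), j from
    Finset.sum_range_reflect (fun j => j) (ℓ+1)]
  rw [Finset.sum_range_id_mul_two]
  simp [Nat.mul_comm]

lemma gauss_eq (n : ℕ) (c : ℝ) (a : Fin n → ℝ) :
    gaussIntegrand n c a = fun x =>
      Real.exp (-c * ∑ j, ((a j) ^ 2)⁻¹)
        * ∏ p : NPairs n, Real.exp (-(c * ((a p.val.2) ^ 2)⁻¹) * x p ^ 2) := by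
  funext x
  rw [gaussIntegrand, mul_add, Real.exp_add]
  congr 1
  rw [Finset.mul_sum, ← Real.exp_sum]
  congr 1
  exact Finset.sum_congr rfl fun p _ => by ring

lemma gauss_integrable {n : ℕ} {c : ℝ} (hc : 0 < c) (a : Fin n → ℝ) (ha : ∀ j, 0 < a j) :
    Integrable (gaussIntegrand n c a) := by
  rw [gauss_eq]
  have h := Integrable.fintype_prod
    (f := fun (p : NPairs n) (u : ℝ) => Real.exp (-(c * ((a p.val.2) ^ 2)⁻¹) * u ^ 2))
    (fun p => integrable_exp_neg_mul_sq (mul_pos hc (inv_pos.2 (pow_pos (ha _) 2))))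
  exact h.const_mul _

lemma gauss_integral {n : ℕ} {c : ℝ} (hc : 0 < c) (a : Fin n → ℝ) (ha : ∀ j, 0 < a j) :
    ∫ x : NPairs n → ℝ, gaussIntegrand n c a x
      = Real.exp (-c * ∑ j, ((a j) ^ 2)⁻¹)
        * ∏ p : NPairs n, (Real.sqrt (Real.pi / c) * a p.val.2) := by
  rw [gauss_eq]
  rw [MeasureTheory.integral_const_mul]
  rw [MeasureTheory.integral_fintype_prod_volume_eq_prod (ι := NPairs n)
    (fun p u => Real.exp (-(c * ((a p.val.2) ^ 2)⁻¹) * u ^ 2))]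
  congr 1
  refine Finset.prod_congr rfl fun p _ => ?_
  rw [integral_gaussian]
  have hap := ha p.val.2
  rw [show Real.pi / (c * ((a p.val.2) ^ 2)⁻¹) = (Real.pi / c) * (a p.val.2) ^ 2 by
    field_simp]
  rw [Real.sqrt_mul (by positivity), Real.sqrt_sq hap.le]

end SHBAux

/-- the eigenvalue of the spherical Hecke–Baxter operator on the spherical
vector is the Archimedean L-factor `L(s,c|0,γ)`:
`2^n (c/π)^{ℓ(ℓ+1)/4} ∫_{(0,∞)^n} Π_j a_j^{iγ_j−ρ_j−s−ℓ/2}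
  (∫_{ℝ^{ℓ(ℓ+1)/2}} e^{−c(Σ_j a_j⁻² + Σ_{j<i} x_{ij}² a_j⁻²)} Πdx) Π_j da_j/a_j
  = Π_j c^{−(s−iγ_j)/2} Γ((s−iγ_j)/2)`,
where `ρ_j = ℓ/2 + 1 − j` and all integrands are absolutely integrable. -/
theorem sphericalHeckeBaxter_eigenvalue
    (ℓ : ℕ) (c : ℝ) (hc : 0 < c) (s : ℂ) (hs : 0 < s.re) (γ : Fin (ℓ+1) → ℝ) :
    (∀ a : Fin (ℓ+1) → ℝ, (∀ j, 0 < a j) → Integrable (gaussIntegrand (ℓ+1) c a))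
    ∧ IntegrableOn
        (fun a : Fin (ℓ+1) → ℝ =>
          (∏ j, (a j : ℂ) ^ (Complex.I * γ j
              - ((ℓ : ℂ)/2 + 1 - (((j : ℕ) : ℂ) + 1)) - s - (ℓ : ℂ)/2))
          * ((∫ x : NPairs (ℓ+1) → ℝ, gaussIntegrand (ℓ+1) c a x : ℝ) : ℂ)
          * ∏ j, ((a j : ℂ))⁻¹)
        (Set.univ.pi fun _ : Fin (ℓ+1) => Set.Ioi (0 : ℝ))
    ∧ (2 : ℂ) ^ (ℓ+1) * (((c / Real.pi) ^ ((ℓ * (ℓ+1) : ℝ) / 4) : ℝ) : ℂ)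
        * ∫ a in Set.univ.pi fun _ : Fin (ℓ+1) => Set.Ioi (0 : ℝ),
            (∏ j, (a j : ℂ) ^ (Complex.I * γ j
                - ((ℓ : ℂ)/2 + 1 - (((j : ℕ) : ℂ) + 1)) - s - (ℓ : ℂ)/2))
            * ((∫ x : NPairs (ℓ+1) → ℝ, gaussIntegrand (ℓ+1) c a x : ℝ) : ℂ)
            * ∏ j, ((a j : ℂ))⁻¹
      = ∏ j, (c : ℂ) ^ (-(s - Complex.I * γ j) / 2)
          * Complex.Gamma ((s - Complex.I * γ j) / 2) := by
  classical
  set F : (Fin (ℓ+1) → ℝ) → ℂ := fun a =>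
    (∏ j, (a j : ℂ) ^ (Complex.I * γ j
        - ((ℓ : ℂ)/2 + 1 - (((j : ℕ) : ℂ) + 1)) - s - (ℓ : ℂ)/2))
    * ((∫ x : NPairs (ℓ+1) → ℝ, gaussIntegrand (ℓ+1) c a x : ℝ) : ℂ)
    * ∏ j, ((a j : ℂ))⁻¹ with hF
  set N := Fintype.card (NPairs (ℓ+1)) with hNdef
  set K : ℝ := Real.sqrt (Real.pi / c) ^ N with hK
  have hzre : ∀ j : Fin (ℓ+1), 0 < (s - Complex.I * γ j).re := by
    intro j
    simpa [Complex.sub_re, Complex.mul_re] using hs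
  set G : Fin (ℓ+1) → ℝ → ℂ := fun j t =>
    (t:ℂ)^(-(s - Complex.I * γ j) - 1) * (Real.exp (-(c * (t^2)⁻¹)) : ℂ) with hG
  have hGint : ∀ j, IntegrableOn (G j) (Set.Ioi 0) :=
    fun j => (SHBAux.lemA c hc _ (hzre j)).1
  have hGval : ∀ j, ∫ t in Set.Ioi (0:ℝ), G j t
      = (1/2 : ℂ) * ((c:ℂ)^(-(s - Complex.I * γ j)/2)
        * Complex.Gamma ((s - Complex.I * γ j)/2)) :=
    fun j => (SHBAux.lemA c hc _ (hzre j)).2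
  set Gfull : Fin (ℓ+1) → ℝ → ℂ := fun j => (Set.Ioi (0:ℝ)).indicator (G j) with hGfull
  have hGfullInt : ∀ j, Integrable (Gfull j) :=
    fun j => (integrable_indicator_iff measurableSet_Ioi).2 (hGint j)
  -- pointwise identity on the positive orthant
  have hpoint : ∀ a : Fin (ℓ+1) → ℝ, (∀ j, 0 < a j) → F a = (K:ℂ) * ∏ j, G j (a j) := by
    intro a ha'
    rw [hF]
    simp only
    rw [SHBAux.gauss_integral hc a ha']
    have hsplit : (∏ p : NPairs (ℓ+1), (Real.sqrt (Real.pi / c) * a p.val.2))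
        = K * ∏ j, (a j) ^ (ℓ - (j:ℕ)) := by
      rw [Finset.prod_mul_distrib, Finset.prod_const, Finset.card_univ, SHBAux.prod_npairs, hK,
        hNdef]
      norm_num
    rw [hsplit]
    have hexp : Real.exp (-c * ∑ j, ((a j) ^ 2)⁻¹)
        = ∏ j, Real.exp (-(c * ((a j) ^ 2)⁻¹)) := by
      rw [← Real.exp_sum]
      congr 1
      rw [Finset.mul_sum]
      exact Finset.sum_congr rfl fun j _ => by ring
    rw [hexp]
    push_cast
    have hfac : ∀ j : Fin (ℓ+1),
        (a j : ℂ) ^ (Complex.I * γ j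
            - ((ℓ : ℂ)/2 + 1 - (((j : ℕ) : ℂ) + 1)) - s - (ℓ : ℂ)/2)
          * Complex.exp (-((c:ℂ) * ((a j : ℂ) ^ 2)⁻¹))
          * ((a j : ℂ)) ^ ((ℓ - (j:ℕ) : ℕ)) * ((a j : ℂ))⁻¹ = G j (a j) := by
      intro j
      have ht0 : ((a j : ℝ) : ℂ) ≠ 0 := Complex.ofReal_ne_zero.2 (ne_of_gt (ha' j))
      have hj : (j:ℕ) ≤ ℓ := Nat.lt_succ_iff.mp j.isLt
      have hcast : (((ℓ - (j:ℕ) : ℕ)) : ℂ) = (ℓ:ℂ) - ((j:ℕ):ℂ) := by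
        push_cast [Nat.cast_sub hj]; ring
      have hAPD : (a j : ℂ) ^ (Complex.I * γ j
            - ((ℓ : ℂ)/2 + 1 - (((j : ℕ) : ℂ) + 1)) - s - (ℓ : ℂ)/2)
          * ((a j : ℂ)) ^ ((ℓ - (j:ℕ) : ℕ)) * ((a j : ℂ))⁻¹
          = (a j : ℂ) ^ (-(s - Complex.I * γ j) - 1) := by
        rw [← Complex.cpow_natCast, ← Complex.cpow_neg_one,
          ← Complex.cpow_add _ _ ht0, ← Complex.cpow_add _ _ ht0, hcast]
        congr 1
        ring
      calc (a j : ℂ) ^ (Complex.I * γ j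
            - ((ℓ : ℂ)/2 + 1 - (((j : ℕ) : ℂ) + 1)) - s - (ℓ : ℂ)/2)
          * Complex.exp (-((c:ℂ) * ((a j : ℂ) ^ 2)⁻¹))
          * ((a j : ℂ)) ^ ((ℓ - (j:ℕ) : ℕ)) * ((a j : ℂ))⁻¹
          = ((a j : ℂ) ^ (Complex.I * γ j
            - ((ℓ : ℂ)/2 + 1 - (((j : ℕ) : ℂ) + 1)) - s - (ℓ : ℂ)/2)
          * ((a j : ℂ)) ^ ((ℓ - (j:ℕ) : ℕ)) * ((a j : ℂ))⁻¹)
          * Complex.exp (-((c:ℂ) * ((a j : ℂ) ^ 2)⁻¹)) := by ring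
        _ = G j (a j) := by
            rw [hAPD, hG]
            congr 1
            rw [Complex.ofReal_exp]
            congr 1
            push_cast
            ring
    calc (∏ j, (a j : ℂ) ^ (Complex.I * γ j
            - ((ℓ : ℂ)/2 + 1 - (((j : ℕ) : ℂ) + 1)) - s - (ℓ : ℂ)/2))
        * ((∏ j, Complex.exp (-((c:ℂ) * ((a j : ℂ) ^ 2)⁻¹)))
            * ((K:ℝ) * ∏ j, ((a j : ℝ):ℂ) ^ ((ℓ - (j:ℕ) : ℕ))))
        * ∏ j, ((a j : ℂ))⁻¹
        = (K:ℂ) * ∏ j, ((a j : ℂ) ^ (Complex.I * γ j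
            - ((ℓ : ℂ)/2 + 1 - (((j : ℕ) : ℂ) + 1)) - s - (ℓ : ℂ)/2)
          * Complex.exp (-((c:ℂ) * ((a j : ℂ) ^ 2)⁻¹))
          * ((a j : ℂ)) ^ ((ℓ - (j:ℕ) : ℕ)) * ((a j : ℂ))⁻¹) := by
          rw [Finset.prod_mul_distrib, Finset.prod_mul_distrib, Finset.prod_mul_distrib]
          ring
      _ = (K:ℂ) * ∏ j, G j (a j) := by
          rw [Finset.prod_congr rfl (fun j _ => hfac j)]
  -- indicator identity
  have hmeas : MeasurableSet (Set.univ.pi fun _ : Fin (ℓ+1) => Set.Ioi (0 : ℝ)) :=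
    MeasurableSet.univ_pi fun _ => measurableSet_Ioi
  have hind : (Set.univ.pi fun _ : Fin (ℓ+1) => Set.Ioi (0 : ℝ)).indicator F
      = fun a => (K:ℂ) * ∏ j, Gfull j (a j) := by
    funext a
    by_cases ha : a ∈ Set.univ.pi fun _ : Fin (ℓ+1) => Set.Ioi (0 : ℝ)
    · have ha' : ∀ j, 0 < a j := fun j => (Set.mem_univ_pi.mp ha) j
      rw [Set.indicator_of_mem ha, hpoint a ha']
      congr 1
      exact Finset.prod_congr rfl fun j _ => by
        rw [hGfull]; exact (Set.indicator_of_mem (ha' j) (G j)).symm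
    · rw [Set.indicator_of_notMem ha]
      obtain ⟨j, hj⟩ : ∃ j, ¬ (0 < a j) := by
        by_contra h
        push_neg at h
        exact ha (Set.mem_univ_pi.mpr fun j => h j)
      rw [Finset.prod_eq_zero (Finset.mem_univ j)
        (by rw [hGfull]; exact Set.indicator_of_notMem hj (G j)), mul_zero]
  refine ⟨fun a ha => SHBAux.gauss_integrable hc a ha, ?_, ?_⟩
  · exact (integrable_indicator_iff hmeas).1
      (by rw [hind]
          exact (Integrable.fintype_prod (f := fun j => Gfull j) hGfullInt).const_mul _)
  · rw [← MeasureTheory.integral_indicator hmeas]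
    rw [hind]
    rw [MeasureTheory.integral_const_mul]
    rw [MeasureTheory.integral_fintype_prod_volume_eq_prod (fun j t => Gfull j t)]
    have hGfi : ∀ j, ∫ t, Gfull j t = ∫ t in Set.Ioi (0:ℝ), G j t := by
      intro j
      rw [hGfull]
      exact MeasureTheory.integral_indicator measurableSet_Ioi
    rw [Finset.prod_congr rfl (fun j _ => by rw [hGfi j, hGval j])]
    rw [Finset.prod_mul_distrib, Finset.prod_const, Finset.card_univ, Fintype.card_fin]
    -- numeric bookkeeping
    have hN2 : (N:ℝ) = (ℓ:ℝ) * ((ℓ:ℝ)+1) / 2 := by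
      have h := SHBAux.card_npairs ℓ
      have h' : ((N * 2 : ℕ) : ℝ) = ((ℓ * (ℓ+1) : ℕ) : ℝ) := by rw [hNdef]; exact_mod_cast h
      push_cast at h'
      linarith
    have hCK : (c / Real.pi) ^ ((ℓ * (ℓ+1) : ℝ) / 4) * K = 1 := by
      have hpc : (0:ℝ) ≤ Real.pi / c := le_of_lt (div_pos Real.pi_pos hc)
      rw [hK, Real.sqrt_eq_rpow, ← Real.rpow_natCast ((Real.pi/c) ^ ((1:ℝ)/2)) N,
        ← Real.rpow_mul hpc]
      rw [show (1:ℝ)/2 * (N:ℝ) = (ℓ * (ℓ+1) : ℝ) / 4 by rw [hN2]; ring]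
      rw [← Real.mul_rpow (le_of_lt (div_pos hc Real.pi_pos)) hpc]
      rw [show c / Real.pi * (Real.pi / c) = 1 by
        field_simp]
      exact Real.one_rpow _
    have hCKc : ((c / Real.pi) ^ ((ℓ * (ℓ+1) : ℝ) / 4) : ℝ) * (K:ℝ) = (1:ℝ) := hCK
    have h2 : (2:ℂ)^(ℓ+1) * (1/2:ℂ)^(ℓ+1) = 1 := by
      rw [← mul_pow]; norm_num
    calc (2 : ℂ) ^ (ℓ+1) * (((c / Real.pi) ^ ((ℓ * (ℓ+1) : ℝ) / 4) : ℝ) : ℂ)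
        * ((K:ℂ) * ((1/2:ℂ)^(ℓ+1) * ∏ j, ((c:ℂ)^(-(s - Complex.I * γ j)/2)
            * Complex.Gamma ((s - Complex.I * γ j)/2))))
        = ((2:ℂ)^(ℓ+1) * (1/2:ℂ)^(ℓ+1))
          * ((((c / Real.pi) ^ ((ℓ * (ℓ+1) : ℝ) / 4) : ℝ) : ℂ) * (K:ℂ))
          * ∏ j, ((c:ℂ)^(-(s - Complex.I * γ j)/2)
            * Complex.Gamma ((s - Complex.I * γ j)/2)) := by ring
      _ = ∏ j, ((c:ℂ)^(-(s - Complex.I * γ j)/2)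
            * Complex.Gamma ((s - Complex.I * γ j)/2)) := by
          rw [h2, show (((c / Real.pi) ^ ((ℓ * (ℓ+1) : ℝ) / 4) : ℝ) : ℂ) * (K:ℂ) = 1 by
            rw [← Complex.ofReal_mul, hCKc, Complex.ofReal_one]]
          ring
end

section
/- Let ℓ ≥ 0, n = ℓ+1, c > 0, s ∈ ℂ with Re(s) > 0, γ ∈ ℝ^n and ε ∈ {0,1}^n; set ρ_j = ℓ/2 + 1 − j for 1 ≤ j ≤ n. Then the eigenvalue of the ramified Hecke–Baxter operator on the ε-spherical vector is the Archimedean L-factor attached to the principal series representation with parameters (ε,γ); explicitly, the following iterated integral identity holds: 2^n (c/π)^{ℓ(ℓ+1)/4} ∫_{(0,∞)^n} [ Π_{j=1}^n a_j^{iγ_j − ε_j − ρ_j − s − ℓ/2} ] · ( ∫_{ℝ^{ℓ(ℓ+1)/2}} exp( −c( Σ_{j=1}^n a_j^{−2} + Σ_{1≤j<i≤n} x_{ij}² a_j^{−2} ) ) Π_{1≤j<i≤n} dx_{ij} ) Π_{j=1}^n (da_j / a_j) = Π_{j=1}^n c^{−(s+ε_j−iγ_j)/2} Γ((s+ε_j−iγ_j)/2)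 = L(s,c|ε,γ). Here a^z for a > 0 and z ∈ ℂ denotes the complex power e^{z·log a}, all integrals are with respect to Lebesgue measure, and the integrand is absolutely integrable. -/
open MeasureTheory

open Set in
lemma prod_npairs {M : Type*} [CommMonoid M] (n : ℕ) (f : Fin n → M) :
    ∏ p : NPairs n, f p.val.2 = ∏ j : Fin n, f j ^ (n - 1 - (j : ℕ)) := by
  have h1 : ∏ p ∈ Finset.univ.filter (fun p : Fin n × Fin n => p.2 < p.1), f p.2
      = ∏ p : NPairs n, f p.val.2 :=
    Finset.prod_subtype _ (fun x => by simp) (fun p : Fin n × Fin n => f p.2)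
  rw [← h1, Finset.prod_filter, Fintype.prod_prod_type, Finset.prod_comm]
  refine Finset.prod_congr rfl fun j _ => ?_
  dsimp only
  rw [← Finset.prod_filter, Finset.prod_const]
  congr 1
  have : (Finset.univ.filter fun i : Fin n => j < i) = Finset.Ioi j := by
    ext; simp
  rw [this, Fin.card_Ioi]

open Set in
lemma gauss_val {n : ℕ} {c : ℝ} (hc : 0 < c) (a : Fin n → ℝ) (ha : ∀ j, 0 < a j) :
    Integrable (gaussIntegrand n c a) ∧
    ∫ x : NPairs n → ℝ, gaussIntegrand n c a x
      = ∏ j, (Real.exp (-c * ((a j)^2)⁻¹)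
          * (Real.sqrt (Real.pi / c) * a j) ^ (n - 1 - (j:ℕ))) := by
  have hfact : gaussIntegrand n c a = fun x => Real.exp (-c * ∑ j, ((a j)^2)⁻¹)
      * ∏ p : NPairs n, Real.exp (-(c * ((a p.val.2)^2)⁻¹) * (x p)^2) := by
    funext x
    rw [gaussIntegrand, mul_add, Real.exp_add]
    congr 1
    rw [← Real.exp_sum]
    congr 1
    rw [neg_mul, Finset.mul_sum, ← Finset.sum_neg_distrib]
    exact Finset.sum_congr rfl fun p _ => by ring
  have hb : ∀ p : NPairs n, 0 < c * ((a p.val.2)^2)⁻¹ :=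
    fun p => mul_pos hc (inv_pos.mpr (pow_pos (ha _) 2))
  have hprod : Integrable fun x : NPairs n → ℝ =>
      ∏ p : NPairs n, Real.exp (-(c * ((a p.val.2)^2)⁻¹) * (x p)^2) :=
    Integrable.fintype_prod (𝕜 := ℝ) (ι := NPairs n) (E := ℝ)
      (f := fun p t => Real.exp (-(c * ((a p.val.2)^2)⁻¹) * t^2))
      fun p => integrable_exp_neg_mul_sq (hb p)
  constructor
  · rw [hfact]; exact hprod.const_mul _
  rw [hfact, integral_const_mul, volume_pi,
    integral_fintype_prod_eq_prod (𝕜 := ℝ) (E := fun _ => ℝ) (ι := NPairs n) (μ := fun _ => volume)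
      (f := fun p t => Real.exp (-(c * ((a p.val.2)^2)⁻¹) * t^2))]
  have hgauss : ∀ p : NPairs n,
      (∫ t : ℝ, Real.exp (-(c * ((a p.val.2)^2)⁻¹) * t^2))
        = Real.sqrt (Real.pi / c) * a p.val.2 := by
    intro p
    rw [integral_gaussian]
    have h1 : Real.pi / (c * ((a p.val.2)^2)⁻¹) = (Real.pi / c) * (a p.val.2)^2 := by
      field_simp
    rw [h1, Real.sqrt_mul (div_nonneg Real.pi_pos.le hc.le), Real.sqrt_sq (ha _).le]
  rw [Finset.prod_congr rfl fun p _ => hgauss p,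
    prod_npairs n (fun j => Real.sqrt (Real.pi / c) * a j)]
  have hexp : Real.exp (-c * ∑ j, ((a j)^2)⁻¹) = ∏ j, Real.exp (-c * ((a j)^2)⁻¹) := by
    rw [← Real.exp_sum]
    congr 1
    rw [neg_mul, Finset.mul_sum, ← Finset.sum_neg_distrib]
    exact Finset.sum_congr rfl fun j _ => by ring
  rw [hexp, ← Finset.prod_mul_distrib]

open Set in
lemma oneDim {c : ℝ} (hc : 0 < c) {w : ℂ} (hw : 0 < w.re) :
    IntegrableOn (fun t : ℝ => (t:ℂ) ^ (-2*w-1) * (Real.exp (-c * (t^2)⁻¹) : ℂ)) (Set.Ioi 0)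
    ∧ ∫ t in Set.Ioi (0:ℝ), (t:ℂ) ^ (-2*w-1) * (Real.exp (-c * (t^2)⁻¹) : ℂ)
        = (1/2 : ℂ) * (c:ℂ) ^ (-w) * Complex.Gamma w := by
  have hcne : (c:ℂ) ≠ 0 := Complex.ofReal_ne_zero.mpr hc.ne'
  set g : ℝ → ℂ := fun y => (y:ℂ)^(w-1) * Complex.exp (-(c*y)) with hgdef
  have gInt : IntegrableOn g (Set.Ioi 0) := by
    have base := Complex.GammaIntegral_convergent hw
    rw [← mul_zero c, ← integrableOn_Ioi_comp_mul_left_iff _ _ hc] at base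
    refine IntegrableOn.congr_fun (base.const_mul (((c:ℂ))^(w-1))⁻¹)
      (fun t ht => ?_) measurableSet_Ioi
    have ht0 : (0:ℝ) < t := ht
    have hcw : ((c:ℂ))^(w-1) ≠ 0 := by
      rw [Ne, Complex.cpow_eq_zero_iff, not_and_or]; exact Or.inl hcne
    simp only [hgdef]
    rw [Complex.ofReal_mul, Complex.mul_cpow_ofReal_nonneg hc.le ht0.le]
    rw [Complex.ofReal_exp]
    push_cast
    field_simp
  have gVal : ∫ y in Set.Ioi (0:ℝ), g y = (c:ℂ)^(-w) * Complex.Gamma w := by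
    have h := Complex.integral_cpow_mul_exp_neg_mul_Ioi hw hc
    have harg : Complex.arg c ≠ Real.pi := by
      rw [Complex.arg_ofReal_of_nonneg hc.le]; exact (Real.pi_ne_zero).symm
    rw [hgdef]
    push_cast
    rw [h, one_div, Complex.inv_cpow _ _ harg, ← Complex.cpow_neg]
  have key : ∀ x ∈ Set.Ioi (0:ℝ), (|(-2:ℝ)| * x ^ ((-2:ℝ) - 1)) • g (x ^ (-2:ℝ))
      = 2 * ((x:ℂ) ^ (-2*w-1) * (Real.exp (-c * (x^2)⁻¹) : ℂ)) := by
    intro x hx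
    have hx0 : (0:ℝ) < x := hx
    have hxne : (x:ℂ) ≠ 0 := Complex.ofReal_ne_zero.mpr hx0.ne'
    have e1 : x ^ (-2:ℝ) = (x^2)⁻¹ := by
      rw [show (-2:ℝ) = ((-2:ℤ):ℝ) by norm_num, Real.rpow_intCast]
      rw [zpow_neg]
      norm_cast
    have e2 : ((x ^ (-2:ℝ) : ℝ) : ℂ) ^ (w-1) = (x:ℂ) ^ ((-2 : ℂ) * (w-1)) := by
      rw [← Complex.cpow_mul_ofReal_nonneg hx0.le]; norm_num
    have e3 : ((x ^ ((-2:ℝ) - 1) : ℝ) : ℂ) = (x:ℂ) ^ ((-3 : ℂ)) := by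
      rw [show (-2:ℝ) - 1 = -3 by norm_num, Complex.ofReal_cpow hx0.le]
      norm_num
    have e4 : Complex.exp (-((c:ℂ) * ((x ^ (-2:ℝ) : ℝ) : ℂ)))
        = (Real.exp (-c * (x^2)⁻¹) : ℂ) := by
      rw [e1, Complex.ofReal_exp]
      push_cast
      ring_nf
    have e5 : (x:ℂ)^((-3:ℂ)) * (x:ℂ)^((-2:ℂ)*(w-1)) = (x:ℂ) ^ (-2*w-1) := by
      rw [← Complex.cpow_add _ _ hxne]
      ring_nf
    simp only [hgdef]
    rw [Complex.real_smul, Complex.ofReal_mul, e2, e3, e4,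
      abs_of_nonpos (by norm_num : (-2:ℝ) ≤ 0), ← e5]
    push_cast
    ring
  have hsub := MeasureTheory.integral_comp_rpow_Ioi g (p := -2) (by norm_num)
  have hint : IntegrableOn (fun x : ℝ => (|(-2:ℝ)| * x ^ ((-2:ℝ)-1)) • g (x ^ (-2:ℝ)))
      (Set.Ioi 0) := (integrableOn_Ioi_comp_rpow_iff g (by norm_num)).mpr gInt
  have hint2 : IntegrableOn
      (fun t : ℝ => (t:ℂ) ^ (-2*w-1) * (Real.exp (-c * (t^2)⁻¹) : ℂ)) (Set.Ioi 0) := by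
    refine IntegrableOn.congr_fun (hint.const_mul (2:ℂ)⁻¹) (fun x hx => ?_) measurableSet_Ioi
    rw [key x hx]
    ring
  refine ⟨hint2, ?_⟩
  calc ∫ t in Set.Ioi (0:ℝ), (t:ℂ) ^ (-2*w-1) * (Real.exp (-c * (t^2)⁻¹) : ℂ)
      = ∫ x in Set.Ioi (0:ℝ), (2:ℂ)⁻¹ * ((|(-2:ℝ)| * x ^ ((-2:ℝ)-1)) • g (x ^ (-2:ℝ))) :=
        setIntegral_congr_fun measurableSet_Ioi (fun x hx => by rw [key x hx]; ring)
    _ = (2:ℂ)⁻¹ * ∫ x in Set.Ioi (0:ℝ), (|(-2:ℝ)| * x ^ ((-2:ℝ)-1)) • g (x ^ (-2:ℝ)) :=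
        integral_const_mul _ _
    _ = (2:ℂ)⁻¹ * ∫ y in Set.Ioi (0:ℝ), g y := by rw [hsub]
    _ = (1/2 : ℂ) * (c:ℂ) ^ (-w) * Complex.Gamma w := by rw [gVal]; ring

set_option maxHeartbeats 1000000 in
/-- the eigenvalue of the ramified Hecke–Baxter operator on the
`ε`-spherical vector is the Archimedean L-factor `L(s,c|ε,γ)`:
`2^n (c/π)^{ℓ(ℓ+1)/4} ∫_{(0,∞)^n} Π_j a_j^{iγ_j−ε_j−ρ_j−s−ℓ/2}
  (∫_{ℝ^{ℓ(ℓ+1)/2}} e^{−c(Σ_j a_j⁻² + Σ_{j<i} x_{ij}² a_j⁻²)} Πdx) Π_j da_j/a_j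
  = Π_j c^{−(s+ε_j−iγ_j)/2} Γ((s+ε_j−iγ_j)/2)`,
where `ρ_j = ℓ/2 + 1 − j`, `ε ∈ {0,1}^n`, and all integrands are absolutely
integrable. -/
theorem ramifiedHeckeBaxter_eigenvalue
    (ℓ : ℕ) (c : ℝ) (hc : 0 < c) (s : ℂ) (hs : 0 < s.re) (γ : Fin (ℓ+1) → ℝ)
    (ε : Fin (ℓ+1) → ℕ) (hε : ∀ j, ε j = 0 ∨ ε j = 1) :
    (∀ a : Fin (ℓ+1) → ℝ, (∀ j, 0 < a j) → Integrable (gaussIntegrand (ℓ+1) c a))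
    ∧ IntegrableOn
        (fun a : Fin (ℓ+1) → ℝ =>
          (∏ j, (a j : ℂ) ^ (Complex.I * γ j - (ε j : ℂ)
              - ((ℓ : ℂ)/2 + 1 - (((j : ℕ) : ℂ) + 1)) - s - (ℓ : ℂ)/2))
          * ((∫ x : NPairs (ℓ+1) → ℝ, gaussIntegrand (ℓ+1) c a x : ℝ) : ℂ)
          * ∏ j, ((a j : ℂ))⁻¹)
        (Set.univ.pi fun _ : Fin (ℓ+1) => Set.Ioi (0 : ℝ))
    ∧ (2 : ℂ) ^ (ℓ+1) * (((c / Real.pi) ^ ((ℓ * (ℓ+1) : ℝ) / 4) : ℝ) : ℂ)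
        * ∫ a in Set.univ.pi fun _ : Fin (ℓ+1) => Set.Ioi (0 : ℝ),
            (∏ j, (a j : ℂ) ^ (Complex.I * γ j - (ε j : ℂ)
                - ((ℓ : ℂ)/2 + 1 - (((j : ℕ) : ℂ) + 1)) - s - (ℓ : ℂ)/2))
            * ((∫ x : NPairs (ℓ+1) → ℝ, gaussIntegrand (ℓ+1) c a x : ℝ) : ℂ)
            * ∏ j, ((a j : ℂ))⁻¹
      = ∏ j, (c : ℂ) ^ (-(s + (ε j : ℂ) - Complex.I * γ j) / 2)
          * Complex.Gamma ((s + (ε j : ℂ) - Complex.I * γ j) / 2) := by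
  -- notation
  set sq : ℝ := Real.sqrt (Real.pi / c) with hsqdef
  set e : Fin (ℓ+1) → ℕ := fun j => (ℓ+1) - 1 - (j:ℕ) with hedef
  set N : ℕ := ∑ j : Fin (ℓ+1), e j with hNdef
  set w : Fin (ℓ+1) → ℂ := fun j => (s + (ε j : ℂ) - Complex.I * γ j) / 2 with hwdef
  set h : Fin (ℓ+1) → ℝ → ℂ :=
    fun j t => (t:ℂ) ^ (-2 * w j - 1) * (Real.exp (-c * (t^2)⁻¹) : ℂ) with hhdef
  have hw : ∀ j, 0 < (w j).re := by
    intro j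
    have h1 : (w j).re = (s.re + (ε j : ℝ)) / 2 := by
      simp [hwdef, Complex.div_re, Complex.add_re, Complex.sub_re, Complex.mul_re,
        Complex.normSq]
    rw [h1]
    have : (0:ℝ) ≤ (ε j : ℝ) := Nat.cast_nonneg _
    linarith
  have hH := fun j => oneDim hc (hw j)
  have hS : MeasurableSet (Set.univ.pi fun _ : Fin (ℓ+1) => Set.Ioi (0 : ℝ)) :=
    MeasurableSet.univ_pi fun _ => measurableSet_Ioi
  -- per-factor identity
  have factor : ∀ (j : Fin (ℓ+1)) (t : ℝ), 0 < t →
      (t:ℂ) ^ (Complex.I * γ j - (ε j : ℂ)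
          - ((ℓ : ℂ)/2 + 1 - (((j : ℕ) : ℂ) + 1)) - s - (ℓ : ℂ)/2)
        * ((Real.exp (-c * (t^2)⁻¹) * (sq * t) ^ (e j) : ℝ) : ℂ) * (t:ℂ)⁻¹
      = (sq:ℂ) ^ (e j) * h j t := by
    intro j t ht
    have htne : (t:ℂ) ≠ 0 := Complex.ofReal_ne_zero.mpr ht.ne'
    have hj : (j:ℕ) ≤ ℓ := Nat.lt_succ_iff.mp j.isLt
    have hcast : ((e j : ℕ) : ℂ) = (ℓ:ℂ) - ((j:ℕ):ℂ) := by
      rw [show e j = ℓ - (j:ℕ) from by simp [hedef], Nat.cast_sub hj]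
    have hpow : (t:ℂ) ^ (Complex.I * γ j - (ε j : ℂ)
          - ((ℓ : ℂ)/2 + 1 - (((j : ℕ) : ℂ) + 1)) - s - (ℓ : ℂ)/2)
        * (t:ℂ) ^ (e j) * (t:ℂ)⁻¹ = (t:ℂ) ^ (-2 * w j - 1) := by
      rw [← Complex.cpow_natCast (t:ℂ) (e j), ← Complex.cpow_neg_one (t:ℂ),
        ← Complex.cpow_add _ _ htne, ← Complex.cpow_add _ _ htne]
      congr 1
      rw [hcast, hwdef]
      ring
    rw [Complex.ofReal_mul, Complex.ofReal_pow, Complex.ofReal_mul, mul_pow, hhdef]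
    calc (t:ℂ) ^ (Complex.I * γ j - (ε j : ℂ)
          - ((ℓ : ℂ)/2 + 1 - (((j : ℕ) : ℂ) + 1)) - s - (ℓ : ℂ)/2)
          * ((Real.exp (-c * (t^2)⁻¹) : ℂ) * ((sq:ℂ)^(e j) * (t:ℂ)^(e j))) * (t:ℂ)⁻¹
        = (sq:ℂ)^(e j) * (((t:ℂ) ^ (Complex.I * γ j - (ε j : ℂ)
            - ((ℓ : ℂ)/2 + 1 - (((j : ℕ) : ℂ) + 1)) - s - (ℓ : ℂ)/2)
            * (t:ℂ) ^ (e j) * (t:ℂ)⁻¹) * (Real.exp (-c * (t^2)⁻¹) : ℂ)) := by ring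
      _ = (sq:ℂ)^(e j) * ((t:ℂ) ^ (-2 * w j - 1) * (Real.exp (-c * (t^2)⁻¹) : ℂ)) := by
          rw [hpow]
  -- main pointwise identity on the positive orthant
  have keyF : ∀ a : Fin (ℓ+1) → ℝ, (∀ j, 0 < a j) →
      (∏ j, (a j : ℂ) ^ (Complex.I * γ j - (ε j : ℂ)
          - ((ℓ : ℂ)/2 + 1 - (((j : ℕ) : ℂ) + 1)) - s - (ℓ : ℂ)/2))
        * ((∫ x : NPairs (ℓ+1) → ℝ, gaussIntegrand (ℓ+1) c a x : ℝ) : ℂ)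
        * ∏ j, ((a j : ℂ))⁻¹
      = ((sq:ℝ)^N : ℝ) * ∏ j, h j (a j) := by
    intro a ha
    rw [(gauss_val hc a ha).2]
    push_cast [Complex.ofReal_prod]
    rw [← Finset.prod_mul_distrib, ← Finset.prod_mul_distrib]
    rw [Finset.prod_congr rfl fun j _ => by
      have := factor j (a j) (ha j)
      push_cast at this ⊢
      exact this]
    rw [Finset.prod_mul_distrib, Finset.prod_pow_eq_pow_sum, ← hNdef]
  -- indicator form
  have hind : (Set.univ.pi fun _ : Fin (ℓ+1) => Set.Ioi (0 : ℝ)).indicator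
      (fun a : Fin (ℓ+1) → ℝ =>
        (∏ j, (a j : ℂ) ^ (Complex.I * γ j - (ε j : ℂ)
            - ((ℓ : ℂ)/2 + 1 - (((j : ℕ) : ℂ) + 1)) - s - (ℓ : ℂ)/2))
        * ((∫ x : NPairs (ℓ+1) → ℝ, gaussIntegrand (ℓ+1) c a x : ℝ) : ℂ)
        * ∏ j, ((a j : ℂ))⁻¹)
      = fun a => ((sq:ℝ)^N : ℝ) * ∏ j, (Set.Ioi (0:ℝ)).indicator (h j) (a j) := by
    funext a
    by_cases hmem : a ∈ Set.univ.pi fun _ : Fin (ℓ+1) => Set.Ioi (0 : ℝ)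
    · rw [Set.indicator_of_mem hmem]
      have ha : ∀ j, 0 < a j := fun j => Set.mem_univ_pi.mp hmem j
      rw [keyF a ha]
      congr 1
      exact Finset.prod_congr rfl fun j _ =>
        (Set.indicator_of_mem (ha j : a j ∈ Set.Ioi (0:ℝ)) _).symm
    · rw [Set.indicator_of_notMem hmem]
      obtain ⟨j, hj⟩ : ∃ j, a j ∉ Set.Ioi (0:ℝ) := by
        by_contra hcon
        push_neg at hcon
        exact hmem (Set.mem_univ_pi.mpr hcon)
      rw [Finset.prod_eq_zero (Finset.mem_univ j) (Set.indicator_of_notMem hj _), mul_zero]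
  -- integrability
  have hIndInt : Integrable (fun a : Fin (ℓ+1) → ℝ =>
      ((sq:ℝ)^N : ℝ) * ∏ j, (Set.Ioi (0:ℝ)).indicator (h j) (a j)) := by
    refine Integrable.const_mul ?_ _
    exact Integrable.fintype_prod (𝕜 := ℂ) (ι := Fin (ℓ+1)) (E := ℝ)
      (f := fun j => (Set.Ioi (0:ℝ)).indicator (h j))
      fun j => (integrable_indicator_iff measurableSet_Ioi).mpr (hH j).1
  have hIntOn : IntegrableOn
      (fun a : Fin (ℓ+1) → ℝ =>
        (∏ j, (a j : ℂ) ^ (Complex.I * γ j - (ε j : ℂ)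
            - ((ℓ : ℂ)/2 + 1 - (((j : ℕ) : ℂ) + 1)) - s - (ℓ : ℂ)/2))
        * ((∫ x : NPairs (ℓ+1) → ℝ, gaussIntegrand (ℓ+1) c a x : ℝ) : ℂ)
        * ∏ j, ((a j : ℂ))⁻¹)
      (Set.univ.pi fun _ : Fin (ℓ+1) => Set.Ioi (0 : ℝ)) := by
    rw [← integrable_indicator_iff hS, hind]
    exact hIndInt
  refine ⟨fun a ha => (gauss_val hc a ha).1, hIntOn, ?_⟩
  -- value of the outer integral
  have hval : (∫ a in Set.univ.pi fun _ : Fin (ℓ+1) => Set.Ioi (0 : ℝ),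
        (∏ j, (a j : ℂ) ^ (Complex.I * γ j - (ε j : ℂ)
            - ((ℓ : ℂ)/2 + 1 - (((j : ℕ) : ℂ) + 1)) - s - (ℓ : ℂ)/2))
        * ((∫ x : NPairs (ℓ+1) → ℝ, gaussIntegrand (ℓ+1) c a x : ℝ) : ℂ)
        * ∏ j, ((a j : ℂ))⁻¹)
      = ((sq:ℝ)^N : ℝ) * ∏ j, ((1/2 : ℂ) * (c:ℂ) ^ (-(w j)) * Complex.Gamma (w j)) := by
    rw [← integral_indicator hS, hind, integral_const_mul, volume_pi,
      integral_fintype_prod_eq_prod (𝕜 := ℂ) (E := fun _ => ℝ) (ι := Fin (ℓ+1)) (μ := fun _ => volume)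
        (f := fun j => (Set.Ioi (0:ℝ)).indicator (h j))]
    congr 1
    refine Finset.prod_congr rfl fun j _ => ?_
    rw [integral_indicator measurableSet_Ioi]
    exact (hH j).2
  rw [hval]
  -- final bookkeeping
  have hN2 : N * 2 = ℓ * (ℓ+1) := by
    have h0 : N = ∑ j ∈ Finset.range (ℓ+1), ((ℓ+1) - 1 - j) := by
      rw [hNdef, ← Fin.sum_univ_eq_sum_range (fun j => (ℓ+1) - 1 - j) (ℓ+1)]
    have h1 := Finset.sum_range_reflect (fun j => j) (ℓ+1)
    calc N * 2 = (∑ j ∈ Finset.range (ℓ+1), j) * 2 := by rw [h0, h1]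
      _ = (ℓ+1) * ((ℓ+1) - 1) := Finset.sum_range_id_mul_two (ℓ+1)
      _ = ℓ * (ℓ+1) := by simp [Nat.mul_comm]
  have hKone : (c / Real.pi) ^ ((ℓ * (ℓ+1) : ℝ) / 4) * (sq:ℝ)^N = 1 := by
    have hNr : (N:ℝ) = (ℓ:ℝ) * (ℓ+1) / 2 := by
      have h3 : ((N:ℝ)) * 2 = (ℓ:ℝ) * ((ℓ:ℝ)+1) := by exact_mod_cast hN2
      linarith
    have hpc : (0:ℝ) ≤ Real.pi / c := div_nonneg Real.pi_pos.le hc.le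
    have hsqr : (sq:ℝ)^N = (Real.pi / c) ^ ((ℓ * (ℓ+1) : ℝ) / 4) := by
      rw [hsqdef, Real.sqrt_eq_rpow, ← Real.rpow_natCast ((Real.pi / c) ^ ((1:ℝ)/2)) N,
        ← Real.rpow_mul hpc]
      congr 1
      rw [hNr]
      push_cast
      ring
    rw [hsqr, ← Real.mul_rpow (div_nonneg hc.le Real.pi_pos.le) hpc]
    rw [show c / Real.pi * (Real.pi / c) = 1 from by
      field_simp]
    exact Real.one_rpow _
  have hprodsplit : ∏ j, ((1/2 : ℂ) * (c:ℂ) ^ (-(w j)) * Complex.Gamma (w j))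
      = (1/2 : ℂ) ^ (ℓ+1) * ∏ j, ((c:ℂ) ^ (-(w j)) * Complex.Gamma (w j)) := by
    rw [Finset.prod_congr rfl fun j _ =>
      (mul_assoc (1/2 : ℂ) ((c:ℂ) ^ (-(w j))) (Complex.Gamma (w j))),
      Finset.prod_mul_distrib, Finset.prod_const, Finset.card_univ, Fintype.card_fin]
  have hRHS : ∏ j, ((c : ℂ) ^ (-(s + (ε j : ℂ) - Complex.I * γ j) / 2)
      * Complex.Gamma ((s + (ε j : ℂ) - Complex.I * γ j) / 2))
      = ∏ j, ((c:ℂ) ^ (-(w j)) * Complex.Gamma (w j)) := by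
    refine Finset.prod_congr rfl fun j _ => ?_
    rw [hwdef, neg_div]
  rw [hprodsplit, hRHS]
  have h2 : (2:ℂ) ^ (ℓ+1) * (1/2 : ℂ) ^ (ℓ+1) = 1 := by
    rw [← mul_pow]
    norm_num
  have hKc : (((c / Real.pi) ^ ((ℓ * (ℓ+1) : ℝ) / 4) : ℝ) : ℂ) * (((sq:ℝ)^N : ℝ) : ℂ) = 1 := by
    rw [← Complex.ofReal_mul, hKone, Complex.ofReal_one]
  calc (2 : ℂ) ^ (ℓ+1) * (((c / Real.pi) ^ ((ℓ * (ℓ+1) : ℝ) / 4) : ℝ) : ℂ)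
        * ((((sq:ℝ)^N : ℝ) : ℂ) * ((1/2 : ℂ) ^ (ℓ+1)
          * ∏ j, ((c:ℂ) ^ (-(w j)) * Complex.Gamma (w j))))
      = ((2:ℂ) ^ (ℓ+1) * (1/2 : ℂ) ^ (ℓ+1))
        * ((((c / Real.pi) ^ ((ℓ * (ℓ+1) : ℝ) / 4) : ℝ) : ℂ) * (((sq:ℝ)^N : ℝ) : ℂ))
        * ∏ j, ((c:ℂ) ^ (-(w j)) * Complex.Gamma (w j)) := by ring
    _ = ∏ j, ((c:ℂ) ^ (-(w j)) * Complex.Gamma (w j)) := by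
        rw [h2, hKc]; ring
end

section
/- For n ≥ 1 let Δ_W(g) = Σ_{S ⊆ {1,…,n}} binom(n,|S|) · det(g[S,S]) for g ∈ Mat_n(ℝ), where g[S,S] is the principal submatrix on rows and columns S (and det(g[∅,∅]) = 1), and extend Δ_W to complex matrices by the same formula. Then the Fourier transform of the modified Gaussian G_W(g) = Δ_W(g) e^{−π Tr(gᵀg)} satisfies, for every h ∈ Mat_n(ℝ): ∫_{Mat_n(ℝ)} Δ_W(g) e^{−π Tr(gᵀg)} e^{2πi Tr(gᵀh)} dg = Δ_W(i·h) · e^{−π Tr(hᵀh)}, where Δ_W(i·h) = Σ_{S ⊆ {1,…,n}} binom(n,|S|) · i^{|S|} · det(h[S,S]). -/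
open MeasureTheory Matrix

/-- The principal minor `Δ_S(g) = det(g[S,S])` (with `det(g[∅,∅]) = 1`). -/
noncomputable def principalMinor {n : ℕ} (g : Matrix (Fin n) (Fin n) ℝ)
    (S : Finset (Fin n)) : ℝ :=
  Matrix.det (Matrix.of fun i j : S => g i j)

/-- `Δ_W(g) = Σ_{S ⊆ {1,…,n}} binom(n,|S|) · det(g[S,S])`. -/
noncomputable def DeltaW {n : ℕ} (g : Matrix (Fin n) (Fin n) ℝ) : ℝ :=
  ∑ S : Finset (Fin n), (n.choose S.card : ℝ) * principalMinor g S

open Complex Real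
open scoped FourierTransform

noncomputable section

namespace MGF

lemma char_cont (c : ℝ) : Continuous (fun x : ℝ ↦ Complex.exp (2*π*Complex.I*(x*c))) := by
  continuity

lemma char_norm (c : ℝ) (x : ℝ) : ‖Complex.exp (2*π*Complex.I*(x*c))‖ = 1 := by
  rw [Complex.norm_exp]
  simp [mul_comm, mul_assoc, mul_left_comm]

lemma gauss0_integrable (c : ℝ) :
    Integrable (fun x : ℝ ↦ Complex.exp (-π*x^2) * Complex.exp (2*π*Complex.I*(x*c))) := by
  have h1 : Integrable (fun x : ℝ ↦ Complex.exp (-(π:ℂ)*x^2)) :=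
    integrable_cexp_neg_mul_sq (by simp [Real.pi_pos])
  have := h1.bdd_mul (char_cont c).aestronglyMeasurable
    (Filter.Eventually.of_forall fun x ↦ le_of_eq (char_norm c x))
  refine this.congr (Filter.Eventually.of_forall fun x ↦ ?_)
  push_cast; ring

lemma gauss1_integrable (c : ℝ) :
    Integrable (fun x : ℝ ↦ (x:ℂ) * Complex.exp (-π*x^2) * Complex.exp (2*π*Complex.I*(x*c))) := by
  have h1 : Integrable (fun x : ℝ ↦ (x:ℂ) * Complex.exp (-(π:ℂ)*x^2)) :=
    integrable_mul_cexp_neg_mul_sq (by simp [Real.pi_pos])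
  have := h1.bdd_mul (char_cont c).aestronglyMeasurable
    (Filter.Eventually.of_forall fun x ↦ le_of_eq (char_norm c x))
  refine this.congr (Filter.Eventually.of_forall fun x ↦ ?_)
  push_cast; ring

lemma gauss0_int (c : ℝ) :
    ∫ x : ℝ, Complex.exp (-π*x^2) * Complex.exp (2*π*Complex.I*(x*c))
      = Complex.exp (-π*c^2) := by
  have := congrFun (fourier_gaussian_pi (b := 1) (by norm_num)) (-c)
  rw [Real.fourier_real_eq_integral_exp_smul] at this
  simp only [one_cpow, div_one, mul_one, one_mul, one_div, mul_one] at this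
  calc ∫ x : ℝ, Complex.exp (-π*x^2) * Complex.exp (2*π*Complex.I*(x*c))
      = ∫ v : ℝ, Complex.exp (((-2*π*v*(-c) : ℝ) : ℂ) * Complex.I) •
          Complex.exp (-(π:ℂ)*v^2) := by
        congr 1; ext v
        rw [smul_eq_mul, ← Complex.exp_add, ← Complex.exp_add]
        push_cast; ring_nf
    _ = Complex.exp (-π*c^2) := by rw [this]; norm_num

lemma gauss1_int (c : ℝ) :
    ∫ x : ℝ, (x:ℂ) * Complex.exp (-π*x^2) * Complex.exp (2*π*Complex.I*(x*c))
      = Complex.I * c * Complex.exp (-π*c^2) := by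
  set f : ℝ → ℂ := fun x ↦ Complex.exp (-(π:ℂ)*x^2) with hfdef
  have hf : Integrable f := integrable_cexp_neg_mul_sq (by simp [Real.pi_pos])
  have hf' : Integrable (fun x : ℝ ↦ x • f x) := by
    have := integrable_mul_cexp_neg_mul_sq (b := (π:ℂ)) (by simp [Real.pi_pos])
    refine this.congr (Filter.Eventually.of_forall fun x ↦ ?_)
    simp [f, real_smul]
  have hd := Real.deriv_fourier hf hf'
  have hFg : 𝓕 f = fun t : ℝ ↦ Complex.exp (-(π:ℂ)*t^2) := by
    have h1 := fourier_gaussian_pi (b := 1) (by norm_num)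
    have h2 : (fun x : ℝ ↦ Complex.exp (-(π:ℂ)*1*x^2)) = f := by
      funext x; simp only [f]; ring_nf
    rw [h2] at h1
    rw [h1]; funext t; simp [one_cpow]
  have hder : ∀ s : ℝ, HasDerivAt (fun t : ℝ ↦ Complex.exp (-(π:ℂ)*t^2))
      (Complex.exp (-(π:ℂ)*s^2) * (-(π:ℂ) * (2*s))) s := by
    intro s
    have h0 : HasDerivAt (fun t : ℝ ↦ (t:ℂ)) 1 s := by
      simpa using (hasDerivAt_id s).ofReal_comp
    have h1 := (((h0.mul h0).const_mul (-(π:ℂ)))).cexp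
    have heq : (fun t : ℝ ↦ Complex.exp (-(π:ℂ)*((t:ℂ)*(t:ℂ))))
        = fun t : ℝ ↦ Complex.exp (-(π:ℂ)*(t:ℂ)^2) := by
      funext t; ring_nf
    simp only [Pi.mul_apply] at h1
    rw [heq] at h1
    convert h1 using 1
    ring_nf
  have hEv := congrFun hd (-c)
  rw [hFg] at hEv
  rw [(hder (-c)).deriv, Real.fourier_real_eq_integral_exp_smul] at hEv
  have hre : ∫ v : ℝ, Complex.exp (((-2*π*v*(-c) : ℝ):ℂ) * Complex.I) •
        ((-2*π*Complex.I*v : ℂ) • f v)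
      = (-2*π*Complex.I) * ∫ x : ℝ, (x:ℂ) * Complex.exp (-π*x^2)
          * Complex.exp (2*π*Complex.I*(x*c)) := by
    rw [← integral_const_mul]
    congr 1; funext v
    simp only [smul_eq_mul, f]
    have harg : Complex.exp (((-2*π*v*(-c):ℝ):ℂ) * Complex.I)
        = Complex.exp (2*π*Complex.I*((v:ℝ)*c)) := by
      congr 1; push_cast; ring
    rw [harg]; ring
  rw [hre] at hEv
  have hne : (-2*(π:ℂ)*Complex.I) ≠ 0 := by
    simp [Complex.ext_iff, Real.pi_ne_zero]
  apply mul_left_cancel₀ hne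
  rw [← hEv]
  push_cast
  simp only [neg_sq]
  linear_combination ((2:ℂ)*π*c*Complex.exp (-(π:ℂ)*c^2)) * Complex.I_sq

variable {n : ℕ}

/-- indicator-type factor selecting matched entries of the permutation monomial -/
def pick (S : Finset (Fin n)) (σ : Equiv.Perm S) (p q : Fin n) (z : ℂ) : ℂ :=
  if hq : q ∈ S then (if ((σ ⟨q, hq⟩ : S) : Fin n) = p then z else 1) else 1

lemma pick_mul (S : Finset (Fin n)) (σ : Equiv.Perm S) (p q : Fin n) (z w : ℂ) :
    pick S σ p q (z*w) = pick S σ p q z * pick S σ p q w := by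
  unfold pick; split_ifs <;> simp

lemma prod_prod_pick (S : Finset (Fin n)) (σ : Equiv.Perm S) (a : Fin n → Fin n → ℂ) :
    ∏ p : Fin n, ∏ q : Fin n, pick S σ p q (a p q)
      = ∏ i : S, a ((σ i : Fin n)) i := by
  rw [Finset.prod_comm]
  have step1 : ∀ q : Fin n, ∏ p : Fin n, pick S σ p q (a p q)
      = if hq : q ∈ S then a ((σ ⟨q,hq⟩ : Fin n)) q else 1 := by
    intro q
    by_cases hq : q ∈ S
    · simp only [pick, dif_pos hq]
      simp [Finset.prod_ite_eq]
    · simp [pick, dif_neg hq]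
  rw [Finset.prod_congr rfl (fun q _ => step1 q)]
  calc ∏ q : Fin n, (if hq : q ∈ S then a ((σ ⟨q,hq⟩ : Fin n)) q else 1)
      = ∏ q ∈ S, (if hq : q ∈ S then a ((σ ⟨q,hq⟩ : Fin n)) q else 1) :=
        (Finset.prod_subset (Finset.subset_univ S) (fun x _ hx => dif_neg hx)).symm
    _ = ∏ q ∈ S.attach, (if hq : (↑q : Fin n) ∈ S then a ((σ ⟨↑q,hq⟩ : Fin n)) ↑q else 1) :=
        (Finset.prod_attach S _).symm
    _ = ∏ i : S, a ((σ i : Fin n)) i := by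
        rw [← Finset.univ_eq_attach]
        refine Finset.prod_congr rfl fun q _ => ?_
        rw [dif_pos q.2]

/-- the 1D factor functions -/
def Fe (S : Finset (Fin n)) (σ : Equiv.Perm S) (h : Matrix (Fin n) (Fin n) ℝ)
    (p q : Fin n) : ℝ → ℂ := fun x ↦
  pick S σ p q (x:ℂ) * (Complex.exp (-π*x^2) * Complex.exp (2*π*Complex.I*(x * h p q)))

lemma Fe_integrable (S : Finset (Fin n)) (σ : Equiv.Perm S) (h : Matrix (Fin n) (Fin n) ℝ)
    (p q : Fin n) : Integrable (Fe S σ h p q) := by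
  unfold Fe pick
  by_cases hq : q ∈ S
  · simp only [dif_pos hq]
    by_cases he : ((σ ⟨q, hq⟩ : S) : Fin n) = p
    · simp only [if_pos he]
      exact (gauss1_integrable (h p q)).congr
        (Filter.Eventually.of_forall fun x => by ring)
    · simp only [if_neg he, one_mul]
      exact gauss0_integrable (h p q)
  · simp only [dif_neg hq, one_mul]
    exact gauss0_integrable (h p q)

lemma Fe_integral (S : Finset (Fin n)) (σ : Equiv.Perm S) (h : Matrix (Fin n) (Fin n) ℝ)
    (p q : Fin n) :
    ∫ x : ℝ, Fe S σ h p q x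
      = pick S σ p q (Complex.I * (h p q)) * Complex.exp (-π*(h p q)^2) := by
  unfold Fe pick
  by_cases hq : q ∈ S
  · simp only [dif_pos hq]
    by_cases he : ((σ ⟨q, hq⟩ : S) : Fin n) = p
    · simp only [if_pos he]
      rw [show (fun x : ℝ => (x:ℂ) * (Complex.exp (-π*x^2) * Complex.exp (2*π*Complex.I*(x * h p q))))
          = fun x : ℝ => (x:ℂ) * Complex.exp (-π*x^2) * Complex.exp (2*π*Complex.I*(x * h p q)) by
        funext x; ring]
      exact gauss1_int (h p q)
    · simp only [if_neg he, one_mul]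
      exact gauss0_int (h p q)
  · simp only [dif_neg hq, one_mul]
    exact gauss0_int (h p q)


lemma trace_sq (g : Matrix (Fin n) (Fin n) ℝ) :
    (gᵀ * g).trace = ∑ p : Fin n, ∑ q : Fin n, (g p q)^2 := by
  simp only [Matrix.trace, Matrix.diag, Matrix.mul_apply, Matrix.transpose_apply, sq]
  exact Finset.sum_comm

lemma trace_mul' (g h : Matrix (Fin n) (Fin n) ℝ) :
    (gᵀ * h).trace = ∑ p : Fin n, ∑ q : Fin n, g p q * h p q := by
  simp only [Matrix.trace, Matrix.diag, Matrix.mul_apply, Matrix.transpose_apply]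
  exact Finset.sum_comm

lemma prod_gaussfactor (a : Matrix (Fin n) (Fin n) ℝ) :
    ∏ p : Fin n, ∏ q : Fin n, Complex.exp (-(π:ℂ)*(a p q)^2)
      = ((Real.exp (-π * (aᵀ*a).trace) : ℝ) : ℂ) := by
  calc ∏ p : Fin n, ∏ q : Fin n, Complex.exp (-(π:ℂ)*(a p q)^2)
      = Complex.exp (∑ p : Fin n, ∑ q : Fin n, -(π:ℂ)*(a p q)^2) := by
        rw [Complex.exp_sum]
        exact Finset.prod_congr rfl fun p _ => (Complex.exp_sum _ _).symm
    _ = ((Real.exp (-π * (aᵀ*a).trace) : ℝ) : ℂ) := by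
        rw [Complex.ofReal_exp, trace_sq]
        congr 1
        push_cast
        rw [Finset.mul_sum]
        exact Finset.sum_congr rfl fun p _ => by rw [Finset.mul_sum]

lemma char_factor (g h : Matrix (Fin n) (Fin n) ℝ) :
    ∏ p : Fin n, ∏ q : Fin n, Complex.exp (2*π*Complex.I*((g p q) * (h p q)))
      = Complex.exp (2*π*Complex.I*(((gᵀ*h).trace : ℝ) : ℂ)) := by
  calc ∏ p : Fin n, ∏ q : Fin n, Complex.exp (2*π*Complex.I*((g p q) * (h p q)))
      = Complex.exp (∑ p : Fin n, ∑ q : Fin n, 2*π*Complex.I*((g p q) * (h p q))) := by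
        rw [Complex.exp_sum]
        exact Finset.prod_congr rfl fun p _ => (Complex.exp_sum _ _).symm
    _ = Complex.exp (2*π*Complex.I*(((gᵀ*h).trace : ℝ) : ℂ)) := by
        congr 1
        rw [trace_mul']
        push_cast
        rw [Finset.mul_sum]
        exact Finset.sum_congr rfl fun p _ => by rw [Finset.mul_sum]

lemma pm_complex (h : Matrix (Fin n) (Fin n) ℝ) (S : Finset (Fin n)) :
    (principalMinor h S : ℂ)
      = ∑ σ : Equiv.Perm S, ((Equiv.Perm.sign σ : ℤ) : ℂ)
          * ∏ i : S, (h ((σ i : Fin n)) i : ℂ) := by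
  rw [principalMinor, Matrix.det_apply]
  push_cast [Units.smul_def, zsmul_eq_mul]
  rfl

end MGF

open MGF

/-- the Fourier transform of the modified Gaussian
`G_W(g) = Δ_W(g) e^{−π Tr(gᵀg)}` is
`∫ Δ_W(g) e^{−π Tr(gᵀg)} e^{2πi Tr(gᵀh)} dg = Δ_W(i·h) e^{−π Tr(hᵀh)}`, where
`Δ_W(i·h) = Σ_S binom(n,|S|) i^{|S|} det(h[S,S])` is the extension of `Δ_W` to complex
matrices evaluated at `i·h`. -/
theorem modifiedGaussian_fourier (n : ℕ) (hn : 1 ≤ n) (h : Matrix (Fin n) (Fin n) ℝ) :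
    ∫ g : Matrix (Fin n) (Fin n) ℝ,
        (DeltaW g : ℂ) * ((Real.exp (-Real.pi * (gᵀ * g).trace) : ℝ) : ℂ)
          * Complex.exp (2 * Real.pi * Complex.I * (((gᵀ * h).trace : ℝ) : ℂ))
      = (∑ S : Finset (Fin n), (n.choose S.card : ℂ) * Complex.I ^ S.card
            * (principalMinor h S : ℂ))
          * ((Real.exp (-Real.pi * (hᵀ * h).trace) : ℝ) : ℂ) := by
  classical
  -- pointwise expansion of the integrand
  have hsplit : ∀ (g : Matrix (Fin n) (Fin n) ℝ) (S : Finset (Fin n)) (σ : Equiv.Perm S),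
      (∏ p : Fin n, ∏ q : Fin n, Fe S σ h p q (g p q))
        = (∏ i : S, (g ((σ i : Fin n)) i : ℂ)) *
            (((Real.exp (-π * (gᵀ*g).trace) : ℝ) : ℂ) *
              Complex.exp (2*π*Complex.I*(((gᵀ*h).trace : ℝ) : ℂ))) := by
    intro g S σ
    calc ∏ p : Fin n, ∏ q : Fin n, Fe S σ h p q (g p q)
        = (∏ p : Fin n, ∏ q : Fin n, pick S σ p q ((g p q : ℝ) : ℂ)) *
            ((∏ p : Fin n, ∏ q : Fin n, Complex.exp (-(π:ℂ)*(g p q)^2)) *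
             (∏ p : Fin n, ∏ q : Fin n, Complex.exp (2*π*Complex.I*((g p q) * (h p q))))) := by
          simp_rw [Fe, Finset.prod_mul_distrib]
      _ = _ := by
          rw [prod_prod_pick, prod_gaussfactor, char_factor]
  have key : ∀ g : Matrix (Fin n) (Fin n) ℝ,
      (DeltaW g : ℂ) * ((Real.exp (-Real.pi * (gᵀ * g).trace) : ℝ) : ℂ)
          * Complex.exp (2 * Real.pi * Complex.I * (((gᵀ * h).trace : ℝ) : ℂ))
        = ∑ S : Finset (Fin n), ∑ σ : Equiv.Perm S,
            ((n.choose S.card : ℂ) * ((Equiv.Perm.sign σ : ℤ) : ℂ)) *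
              ∏ p : Fin n, ∏ q : Fin n, Fe S σ h p q (g p q) := by
    intro g
    rw [show (DeltaW g : ℂ) = ∑ S : Finset (Fin n), (n.choose S.card : ℂ) *
        ∑ σ : Equiv.Perm S, ((Equiv.Perm.sign σ : ℤ) : ℂ)
          * ∏ i : S, (g ((σ i : Fin n)) i : ℂ) from by
      rw [DeltaW]
      push_cast
      exact Finset.sum_congr rfl fun S _ => by rw [pm_complex]]
    rw [Finset.sum_mul, Finset.sum_mul]
    refine Finset.sum_congr rfl fun S _ => ?_
    rw [Finset.mul_sum, Finset.sum_mul, Finset.sum_mul]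
    refine Finset.sum_congr rfl fun σ _ => ?_
    rw [hsplit g S σ]
    ring
  have hint : ∀ (S : Finset (Fin n)) (σ : Equiv.Perm S),
      Integrable (fun g : Matrix (Fin n) (Fin n) ℝ => ∏ p : Fin n, ∏ q : Fin n,
        Fe S σ h p q (g p q)) := by
    intro S σ
    exact Integrable.fintype_prod (f := fun p (v : Fin n → ℝ) => ∏ q : Fin n, Fe S σ h p q (v q))
      (fun p => Integrable.fintype_prod (f := fun q (x : ℝ) => Fe S σ h p q x)
        (fun q => Fe_integrable S σ h p q))
  have hPQ : ∀ (S : Finset (Fin n)) (σ : Equiv.Perm S),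
      (∫ g : Matrix (Fin n) (Fin n) ℝ, ∏ p : Fin n, ∏ q : Fin n, Fe S σ h p q (g p q))
        = ∏ p : Fin n, ∏ q : Fin n, ∫ x : ℝ, Fe S σ h p q x := by
    intro S σ
    calc (∫ g : Matrix (Fin n) (Fin n) ℝ, ∏ p : Fin n, ∏ q : Fin n, Fe S σ h p q (g p q))
        = ∏ p : Fin n, ∫ v : Fin n → ℝ, ∏ q : Fin n, Fe S σ h p q (v q) :=
          MeasureTheory.integral_fintype_prod_eq_prod
            (f := fun p (v : Fin n → ℝ) => ∏ q : Fin n, Fe S σ h p q (v q))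
      _ = ∏ p : Fin n, ∏ q : Fin n, ∫ x : ℝ, Fe S σ h p q x :=
          Finset.prod_congr rfl fun p _ =>
            MeasureTheory.integral_fintype_prod_eq_prod
              (f := fun q (x : ℝ) => Fe S σ h p q x)
  calc ∫ g : Matrix (Fin n) (Fin n) ℝ,
        (DeltaW g : ℂ) * ((Real.exp (-Real.pi * (gᵀ * g).trace) : ℝ) : ℂ)
          * Complex.exp (2 * Real.pi * Complex.I * (((gᵀ * h).trace : ℝ) : ℂ))
      = ∫ g : Matrix (Fin n) (Fin n) ℝ, ∑ S : Finset (Fin n), ∑ σ : Equiv.Perm S,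
          ((n.choose S.card : ℂ) * ((Equiv.Perm.sign σ : ℤ) : ℂ)) *
            ∏ p : Fin n, ∏ q : Fin n, Fe S σ h p q (g p q) := by
        congr 1; funext g; exact key g
    _ = ∑ S : Finset (Fin n), ∑ σ : Equiv.Perm S,
          ((n.choose S.card : ℂ) * ((Equiv.Perm.sign σ : ℤ) : ℂ)) *
            ∏ p : Fin n, ∏ q : Fin n, ∫ x : ℝ, Fe S σ h p q x := by
        rw [integral_finset_sum _ (fun S _ =>
          integrable_finset_sum _ (fun σ _ => (hint S σ).const_mul _))]
        refine Finset.sum_congr rfl fun S _ => ?_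
        rw [integral_finset_sum _ (fun σ _ => (hint S σ).const_mul _)]
        refine Finset.sum_congr rfl fun σ _ => ?_
        rw [integral_const_mul, hPQ S σ]
    _ = ∑ S : Finset (Fin n), ∑ σ : Equiv.Perm S,
          ((n.choose S.card : ℂ) * ((Equiv.Perm.sign σ : ℤ) : ℂ)) *
            (Complex.I ^ S.card * (∏ i : S, (h ((σ i : Fin n)) i : ℂ)) *
              ((Real.exp (-π * (hᵀ*h).trace) : ℝ) : ℂ)) := by
        refine Finset.sum_congr rfl fun S _ => Finset.sum_congr rfl fun σ _ => ?_
        congr 1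
        calc ∏ p : Fin n, ∏ q : Fin n, ∫ x : ℝ, Fe S σ h p q x
            = (∏ p : Fin n, ∏ q : Fin n, pick S σ p q (Complex.I * (h p q))) *
                ∏ p : Fin n, ∏ q : Fin n, Complex.exp (-(π:ℂ)*(h p q)^2) := by
              simp_rw [Fe_integral, Finset.prod_mul_distrib]
          _ = _ := by
              rw [prod_prod_pick S σ (fun p q => Complex.I * (h p q)), prod_gaussfactor,
                Finset.prod_mul_distrib, Finset.prod_const, Finset.card_univ, Fintype.card_coe]
    _ = _ := by
        rw [Finset.sum_mul]
        refine Finset.sum_congr rfl fun S _ => ?_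
        rw [pm_complex, Finset.mul_sum, Finset.sum_mul]
        refine Finset.sum_congr rfl fun σ _ => ?_
        ring

end
end

section
/- For n ≥ 1 let Δ_W(g) = Σ_{S ⊆ {1,…,n}} binom(n,|S|) · det(g[S,S]) for g ∈ Mat_n(ℝ) (with det(g[∅,∅]) = 1). Then the Fourier transform of the ε-regularized modified Feynman measure density converges, as ε → 0⁺, to e^{−iπn²/4} times the complex conjugate of the Feynman density: for every fixed h ∈ Mat_n(ℝ), lim_{ε→0⁺} ∫_{Mat_n(ℝ)} Δ_W(g) e^{−(ε+iπ) Tr(gᵀg)} e^{2πi Tr(gᵀh)} dg = e^{−iπ n²/4} · Δ_W(h) · e^{iπ Tr(hᵀh)}. -/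
open MeasureTheory Matrix

open Complex Real Filter
open scoped Real FourierTransform

section OneDim
variable {b : ℂ}

lemma quad_aux (y : ℝ) (hb0 : b ≠ 0) :
    (0:ℂ) - (2 * ↑π * I * ↑y) ^ 2 / (4 * -b) = -(π:ℂ) ^ 2 * y ^ 2 / b := by
  have : (2 * ↑π * I * (y:ℂ)) ^ 2 = -(4 * (π:ℂ)^2 * y^2) := by
    ring_nf; rw [I_sq]; ring
  rw [this]; field_simp; ring

lemma int_gauss0 (hb : 0 < b.re) (y : ℝ) :
    ∫ x : ℝ, Complex.exp (-b * x ^ 2 + (2 * π * I * y) * x)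
      = (↑π / b) ^ (1/2 : ℂ) * Complex.exp (-(π:ℂ) ^ 2 * y ^ 2 / b) := by
  have hb' : (-b).re < 0 := by simpa using hb
  have hb0 : b ≠ 0 := fun hh => by simp [hh] at hb
  have h2 := integral_cexp_quadratic hb' (2 * π * I * y) 0
  rw [neg_neg, quad_aux y hb0] at h2
  simpa using h2

lemma fourier_gauss_eq (hb : 0 < b.re) (w : ℝ) :
    𝓕 (fun x : ℝ => Complex.exp (-b * x ^ 2)) w
      = (↑π / b) ^ (1/2 : ℂ) * Complex.exp (-(π:ℂ) ^ 2 * w ^ 2 / b) := by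
  rw [Real.fourier_real_eq_integral_exp_smul]
  have : ∀ v : ℝ, Complex.exp (↑(-2 * π * v * w) * I) • Complex.exp (-b * v ^ 2)
      = Complex.exp (-b * v ^ 2 + (2 * π * I * (-w)) * v) := by
    intro v
    rw [smul_eq_mul, ← Complex.exp_add]
    congr 1
    push_cast; ring
  simp_rw [this]
  have h0 := int_gauss0 hb (-w)
  push_cast at h0
  rw [h0]
  ring_nf

lemma int_gauss1 (hb : 0 < b.re) (y : ℝ) :
    ∫ x : ℝ, (x:ℂ) * Complex.exp (-b * x ^ 2 + (2 * π * I * y) * x)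
      = (↑π / b) ^ (1/2 : ℂ) * (I * π * y / b) * Complex.exp (-(π:ℂ) ^ 2 * y ^ 2 / b) := by
  have hb0 : b ≠ 0 := fun hh => by simp [hh] at hb
  set f : ℝ → ℂ := fun x => Complex.exp (-b * x ^ 2) with hf_def
  have hf : Integrable f := integrable_cexp_neg_mul_sq hb
  have hf' : Integrable (fun x : ℝ => x • f x) := by
    simpa [hf_def, Complex.real_smul] using integrable_mul_cexp_neg_mul_sq hb
  set w : ℝ := -y with hw
  have hG : HasDerivAt (fun w : ℝ => (↑π / b) ^ (1/2 : ℂ) * Complex.exp (-(π:ℂ) ^ 2 * w ^ 2 / b))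
      ((↑π / b) ^ (1/2 : ℂ) * (Complex.exp (-(π:ℂ) ^ 2 * w ^ 2 / b) * (-(π:ℂ) ^ 2 * (2 * w) / b))) w := by
    have h1 : HasDerivAt (fun z : ℂ => -(π:ℂ) ^ 2 * z ^ 2 / b) (-(π:ℂ) ^ 2 * (2 * w) / b) (w : ℂ) := by
      simpa using ((hasDerivAt_pow 2 (w:ℂ)).const_mul (-(π:ℂ)^2)).div_const b
    exact ((h1.cexp.comp_ofReal).const_mul _)
  have hD := Real.hasDerivAt_fourier hf hf' w
  rw [funext fun w => fourier_gauss_eq hb w] at hD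
  have huniq := hD.unique hG
  rw [Real.fourier_real_eq_integral_exp_smul] at huniq
  have hrw : ∀ v : ℝ, Complex.exp (↑(-2 * π * v * w) * I) • ((-2 * ↑π * I * ↑v) • f v)
      = (-2 * ↑π * I) * ((v:ℂ) * Complex.exp (-b * v ^ 2 + (2 * π * I * y) * v)) := by
    intro v
    have hexp : Complex.exp (↑(-2 * π * v * w) * I) * Complex.exp (-b * v ^ 2)
        = Complex.exp (-b * v ^ 2 + (2 * π * I * y) * v) := by
      rw [← Complex.exp_add]; congr 1; rw [hw]; push_cast; ring
    calc Complex.exp (↑(-2 * π * v * w) * I) • ((-2 * ↑π * I * ↑v) • f v)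
        = (-2 * ↑π * I) * ((v:ℂ) * (Complex.exp (↑(-2 * π * v * w) * I) * Complex.exp (-b * v ^ 2))) := by
          simp only [smul_eq_mul, hf_def]; ring
      _ = (-2 * ↑π * I) * ((v:ℂ) * Complex.exp (-b * v ^ 2 + (2 * π * I * y) * v)) := by rw [hexp]
  simp_rw [hrw] at huniq
  rw [integral_const_mul] at huniq
  have hne : (-2 * (π:ℂ) * I) ≠ 0 := by
    simp [Real.pi_ne_zero, I_ne_zero]
  have hfin := (eq_div_of_mul_eq hne ?hh : ∫ x : ℝ, (x:ℂ) * Complex.exp (-b * x ^ 2 + (2 * π * I * y) * x)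
      = ((↑π / b) ^ (1/2 : ℂ) * (Complex.exp (-(π:ℂ) ^ 2 * w ^ 2 / b) * (-(π:ℂ) ^ 2 * (2 * w) / b))) / (-2 * ↑π * I))
  case hh =>
    rw [mul_comm] at huniq
    exact huniq
  rw [hfin, hw]
  rw [div_eq_iff hne]
  push_cast
  field_simp
  ring_nf
  rw [I_sq]
  ring

lemma integrable_gauss0 (hb : 0 < b.re) (y : ℝ) :
    Integrable fun x : ℝ => Complex.exp (-b * x ^ 2 + (2 * π * I * y) * x) := by
  have hb' : (-b).re < 0 := by simpa using hb
  simpa using integrable_cexp_quadratic' hb' (2 * π * I * y) 0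

lemma integrable_gauss1 (hb : 0 < b.re) (y : ℝ) :
    Integrable fun x : ℝ => (x:ℂ) * Complex.exp (-b * x ^ 2 + (2 * π * I * y) * x) := by
  have hmeas : AEStronglyMeasurable
      (fun x : ℝ => (x:ℂ) * Complex.exp (-b * x ^ 2 + (2 * π * I * y) * x)) volume := by
    apply Continuous.aestronglyMeasurable
    fun_prop
  refine (integrable_mul_exp_neg_mul_sq hb).abs.mono' hmeas ?_
  filter_upwards with x
  rw [norm_mul]
  simp only [Complex.norm_real, Real.norm_eq_abs, Complex.norm_exp]
  have hre : (-b * x ^ 2 + (2 * π * I * y) * x).re = -b.re * x ^ 2 := by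
    simp [Complex.add_re, Complex.mul_re, Complex.mul_im, ← Complex.ofReal_pow]
  rw [hre, abs_mul, abs_of_pos (Real.exp_pos _)]

/-- per-entry integrand -/
noncomputable def entryFun (b : ℂ) (y : ℝ) (c : Prop) [Decidable c] (x : ℝ) : ℂ :=
  (if c then (x:ℂ) else 1) * Complex.exp (-b * x ^ 2 + (2 * π * I * y) * x)

lemma entryFun_integrable (hb : 0 < b.re) (y : ℝ) (c : Prop) [Decidable c] :
    Integrable (entryFun b y c) := by
  unfold entryFun
  by_cases hc : c
  · simpa [hc] using integrable_gauss1 hb y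
  · simpa [hc] using integrable_gauss0 hb y

lemma entryFun_integral (hb : 0 < b.re) (y : ℝ) (c : Prop) [Decidable c] :
    ∫ x : ℝ, entryFun b y c x
      = (↑π / b) ^ (1/2 : ℂ) * (if c then I * π * y / b else 1)
          * Complex.exp (-(π:ℂ) ^ 2 * y ^ 2 / b) := by
  unfold entryFun
  by_cases hc : c
  · simp only [hc, if_true]
    rw [int_gauss1 hb y]
  · simp only [hc, if_false, one_mul, mul_one]
    exact int_gauss0 hb y

end OneDim

section Grid

lemma prod_grid {n : ℕ} (S : Finset (Fin n)) (τ : Fin n → Fin n) (v : Fin n → Fin n → ℂ) :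
    (∏ i : Fin n, ∏ j : Fin n, if j ∈ S ∧ τ j = i then v i j else 1)
      = ∏ j : {x // x ∈ S}, v (τ j) j := by
  rw [Finset.prod_comm]
  have h1 : ∀ j : Fin n, (∏ i : Fin n, if j ∈ S ∧ τ j = i then v i j else 1)
      = if j ∈ S then v (τ j) j else 1 := by
    intro j
    by_cases hS : j ∈ S
    · simp only [hS, true_and]
      rw [Finset.prod_ite_eq Finset.univ (τ j) (fun i => v i j)]
      simp
    · simp [hS]
  simp_rw [h1]
  rw [Finset.prod_ite_mem, Finset.univ_inter]
  exact (Finset.prod_coe_sort S fun j => v (τ j) j).symm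

lemma trace_transpose_mul_cast {n : ℕ} (g h : Matrix (Fin n) (Fin n) ℝ) :
    (((gᵀ * h).trace : ℝ) : ℂ) = ∑ i : Fin n, ∑ j : Fin n, (g i j : ℂ) * (h i j : ℂ) := by
  have h1 : (gᵀ * h).trace = ∑ j : Fin n, ∑ i : Fin n, g i j * h i j := by
    simp [Matrix.trace, Matrix.diag, Matrix.mul_apply, Matrix.transpose_apply]
  rw [h1, Finset.sum_comm]
  push_cast
  rfl

/-- pointwise factorization of the integrand into a product over the entries -/
lemma integrand_factor {n : ℕ} (b : ℂ) (h : Matrix (Fin n) (Fin n) ℝ) (S : Finset (Fin n))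
    (τ : Fin n → Fin n) (g : Matrix (Fin n) (Fin n) ℝ) :
    (∏ j : {x // x ∈ S}, (g (τ j) j : ℂ)) *
        Complex.exp (-b * (((gᵀ * g).trace : ℝ) : ℂ)) *
        Complex.exp (2 * π * I * (((gᵀ * h).trace : ℝ) : ℂ))
      = ∏ i : Fin n, ∏ j : Fin n, entryFun b (h i j) (j ∈ S ∧ τ j = i) (g i j) := by
  unfold entryFun
  simp_rw [Finset.prod_mul_distrib]
  rw [prod_grid S τ (fun i j => (g i j : ℂ))]
  simp_rw [← Complex.exp_sum]
  rw [mul_assoc, ← Complex.exp_add]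
  congr 2
  rw [trace_transpose_mul_cast g g, trace_transpose_mul_cast g h]
  simp only [Finset.mul_sum]
  rw [← Finset.sum_add_distrib]
  refine Finset.sum_congr rfl fun i _ => ?_
  rw [← Finset.sum_add_distrib]
  refine Finset.sum_congr rfl fun j _ => ?_
  ring

end Grid

section Key
variable {n : ℕ}

lemma key_integrable {b : ℂ} (hb : 0 < b.re) (h : Matrix (Fin n) (Fin n) ℝ)
    (S : Finset (Fin n)) (τ : Fin n → Fin n) :
    Integrable (fun g : Matrix (Fin n) (Fin n) ℝ =>
      (∏ j : {x // x ∈ S}, (g (τ j) j : ℂ)) *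
        Complex.exp (-b * (((gᵀ * g).trace : ℝ) : ℂ)) *
        Complex.exp (2 * π * I * (((gᵀ * h).trace : ℝ) : ℂ))) := by
  have := funext (integrand_factor b h S τ)
  rw [this]
  exact Integrable.fintype_prod
    (f := fun i (r : Fin n → ℝ) => ∏ j : Fin n, entryFun b (h i j) (j ∈ S ∧ τ j = i) (r j))
    (fun i => Integrable.fintype_prod (fun j => entryFun_integrable hb _ _))

lemma key_integral {b : ℂ} (hb : 0 < b.re) (h : Matrix (Fin n) (Fin n) ℝ)
    (S : Finset (Fin n)) (τ : Fin n → Fin n) :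
    ∫ g : Matrix (Fin n) (Fin n) ℝ,
      (∏ j : {x // x ∈ S}, (g (τ j) j : ℂ)) *
        Complex.exp (-b * (((gᵀ * g).trace : ℝ) : ℂ)) *
        Complex.exp (2 * π * I * (((gᵀ * h).trace : ℝ) : ℂ))
      = ((↑π / b) ^ (1/2 : ℂ)) ^ (n * n)
          * Complex.exp (-(π:ℂ) ^ 2 * (((hᵀ * h).trace : ℝ) : ℂ) / b)
          * ∏ j : {x // x ∈ S}, (I * π * (h (τ j) j) / b) := by
  have hfac := funext (integrand_factor b h S τ)
  rw [hfac]
  have houter : ∫ g : Matrix (Fin n) (Fin n) ℝ,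
      ∏ i : Fin n, ∏ j : Fin n, entryFun b (h i j) (j ∈ S ∧ τ j = i) (g i j)
      = ∏ i : Fin n, ∫ r : Fin n → ℝ, ∏ j : Fin n, entryFun b (h i j) (j ∈ S ∧ τ j = i) (r j) :=
    MeasureTheory.integral_fintype_prod_eq_prod
      (f := fun i (r : Fin n → ℝ) => ∏ j : Fin n, entryFun b (h i j) (j ∈ S ∧ τ j = i) (r j))
  rw [houter]
  have hinner : ∀ i : Fin n, ∫ r : Fin n → ℝ, ∏ j : Fin n, entryFun b (h i j) (j ∈ S ∧ τ j = i) (r j)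
      = ∏ j : Fin n, ∫ x : ℝ, entryFun b (h i j) (j ∈ S ∧ τ j = i) x := fun i =>
    MeasureTheory.integral_fintype_prod_eq_prod
      (f := fun j (x : ℝ) => entryFun b (h i j) (j ∈ S ∧ τ j = i) x)
  simp_rw [hinner, entryFun_integral hb]
  simp_rw [Finset.prod_mul_distrib]
  rw [Finset.prod_const, Finset.prod_const, Finset.card_univ, Fintype.card_fin, ← pow_mul]
  rw [prod_grid S τ (fun i j => I * π * (h i j) / b)]
  simp_rw [← Complex.exp_sum]
  have hTr : ∑ i : Fin n, ∑ j : Fin n, -(π:ℂ) ^ 2 * (h i j : ℂ) ^ 2 / b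
      = -(π:ℂ) ^ 2 * (((hᵀ * h).trace : ℝ) : ℂ) / b := by
    rw [trace_transpose_mul_cast h h]
    simp only [Finset.mul_sum, Finset.sum_div]
    refine Finset.sum_congr rfl fun i _ => Finset.sum_congr rfl fun j _ => ?_
    ring
  rw [hTr]
  ring

end Key

section Main
variable {n : ℕ}

/-- extension of a permutation of `S` to all of `Fin n` (by the identity off `S`). -/
def tau {n : ℕ} (S : Finset (Fin n)) (σ : Equiv.Perm {x // x ∈ S}) : Fin n → Fin n :=
  fun j => if hj : j ∈ S then (σ ⟨j, hj⟩ : Fin n) else j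

lemma tau_coe {S : Finset (Fin n)} (σ : Equiv.Perm {x // x ∈ S}) (j : {x // x ∈ S}) :
    tau S σ (j : Fin n) = (σ j : Fin n) := by
  simp [tau]

lemma minor_expand (g : Matrix (Fin n) (Fin n) ℝ) (S : Finset (Fin n)) :
    ((principalMinor g S : ℝ) : ℂ)
      = ∑ σ : Equiv.Perm {x // x ∈ S}, ((Equiv.Perm.sign σ : ℤ) : ℂ)
          * ∏ j : {x // x ∈ S}, (g (tau S σ j) j : ℂ) := by
  unfold principalMinor
  rw [Matrix.det_apply]
  push_cast [Units.smul_def, zsmul_eq_mul]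
  refine Finset.sum_congr rfl fun σ _ => ?_
  congr 1
  refine Finset.prod_congr rfl fun j _ => ?_
  rw [tau_coe]
  rfl

lemma main_identity {b : ℂ} (hb : 0 < b.re) (h : Matrix (Fin n) (Fin n) ℝ) :
    ∫ g : Matrix (Fin n) (Fin n) ℝ,
      (DeltaW g : ℂ)
        * Complex.exp (-b * (((gᵀ * g).trace : ℝ) : ℂ))
        * Complex.exp (2 * π * I * (((gᵀ * h).trace : ℝ) : ℂ))
      = ((↑π / b) ^ (1/2 : ℂ)) ^ (n * n)
          * Complex.exp (-(π:ℂ) ^ 2 * (((hᵀ * h).trace : ℝ) : ℂ) / b)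
          * ∑ S : Finset (Fin n), (n.choose S.card : ℂ)
              * ((I * π / b) ^ S.card * ((principalMinor h S : ℝ) : ℂ)) := by
  have hexpand : (fun g : Matrix (Fin n) (Fin n) ℝ =>
      (DeltaW g : ℂ)
        * Complex.exp (-b * (((gᵀ * g).trace : ℝ) : ℂ))
        * Complex.exp (2 * π * I * (((gᵀ * h).trace : ℝ) : ℂ)))
      = fun g : Matrix (Fin n) (Fin n) ℝ => ∑ S : Finset (Fin n), ∑ σ : Equiv.Perm {x // x ∈ S},
          ((n.choose S.card : ℂ) * ((Equiv.Perm.sign σ : ℤ) : ℂ))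
            * ((∏ j : {x // x ∈ S}, (g (tau S σ j) j : ℂ))
              * Complex.exp (-b * (((gᵀ * g).trace : ℝ) : ℂ))
              * Complex.exp (2 * π * I * (((gᵀ * h).trace : ℝ) : ℂ))) := by
    funext g
    have : (DeltaW g : ℂ) = ∑ S : Finset (Fin n), (n.choose S.card : ℂ)
        * ∑ σ : Equiv.Perm {x // x ∈ S}, ((Equiv.Perm.sign σ : ℤ) : ℂ)
            * ∏ j : {x // x ∈ S}, (g (tau S σ j) j : ℂ) := by
      unfold DeltaW
      push_cast
      exact Finset.sum_congr rfl fun S _ => by rw [minor_expand]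
    rw [this, Finset.sum_mul, Finset.sum_mul]
    refine Finset.sum_congr rfl fun S _ => ?_
    rw [Finset.mul_sum, Finset.sum_mul, Finset.sum_mul]
    refine Finset.sum_congr rfl fun σ _ => ?_
    ring
  rw [hexpand]
  rw [integral_finset_sum _ (fun S _ => integrable_finset_sum _
    (fun σ _ => ((key_integrable hb h S (tau S σ)).const_mul _)))]
  have hswap : ∀ S : Finset (Fin n),
      ∫ g : Matrix (Fin n) (Fin n) ℝ, ∑ σ : Equiv.Perm {x // x ∈ S},
        ((n.choose S.card : ℂ) * ((Equiv.Perm.sign σ : ℤ) : ℂ))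
          * ((∏ j : {x // x ∈ S}, (g (tau S σ j) j : ℂ))
            * Complex.exp (-b * (((gᵀ * g).trace : ℝ) : ℂ))
            * Complex.exp (2 * π * I * (((gᵀ * h).trace : ℝ) : ℂ)))
      = ∑ σ : Equiv.Perm {x // x ∈ S},
        ((n.choose S.card : ℂ) * ((Equiv.Perm.sign σ : ℤ) : ℂ))
          * (((↑π / b) ^ (1/2 : ℂ)) ^ (n * n)
              * Complex.exp (-(π:ℂ) ^ 2 * (((hᵀ * h).trace : ℝ) : ℂ) / b)
              * ∏ j : {x // x ∈ S}, (I * π * (h (tau S σ j) j) / b)) := by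
    intro S
    rw [integral_finset_sum _ (fun σ _ => ((key_integrable hb h S (tau S σ)).const_mul _))]
    refine Finset.sum_congr rfl fun σ _ => ?_
    rw [integral_const_mul, key_integral hb h S (tau S σ)]
  simp_rw [hswap]
  -- now reassemble the determinant
  rw [Finset.mul_sum]
  refine Finset.sum_congr rfl fun S _ => ?_
  have hdet : ∑ σ : Equiv.Perm {x // x ∈ S}, ((Equiv.Perm.sign σ : ℤ) : ℂ)
      * ∏ j : {x // x ∈ S}, (I * π * (h (tau S σ j) j) / b)
      = (I * π / b) ^ S.card * ((principalMinor h S : ℝ) : ℂ) := by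
    have h1 : ∀ (σ : Equiv.Perm {x // x ∈ S}),
        (∏ j : {x // x ∈ S}, (I * ↑π * (h (tau S σ j) j) / b))
        = ∏ j : {x // x ∈ S}, ((I * ↑π / b) • (Matrix.of fun i j : {x // x ∈ S} => ((h i j : ℝ) : ℂ))) (σ j) j := by
      intro σ
      refine Finset.prod_congr rfl fun j _ => ?_
      rw [tau_coe]
      simp only [Matrix.smul_apply, Matrix.of_apply, smul_eq_mul]
      ring
    simp_rw [h1]
    have h2 := (Matrix.det_apply ((I * ↑π / b) • (Matrix.of fun i j : {x // x ∈ S} => ((h i j : ℝ) : ℂ)))).symm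
    rw [show ∑ σ : Equiv.Perm {x // x ∈ S}, ((Equiv.Perm.sign σ : ℤ) : ℂ)
        * ∏ j : {x // x ∈ S}, ((I * ↑π / b) • (Matrix.of fun i j : {x // x ∈ S} => ((h i j : ℝ) : ℂ))) (σ j) j
      = Matrix.det ((I * ↑π / b) • (Matrix.of fun i j : {x // x ∈ S} => ((h i j : ℝ) : ℂ))) from by
        rw [Matrix.det_apply]
        refine Finset.sum_congr rfl fun σ _ => ?_
        rw [Units.smul_def, zsmul_eq_mul]]
    rw [Matrix.det_smul, Fintype.card_coe]
    congr 1
    unfold principalMinor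
    rw [show (Matrix.of fun i j : {x // x ∈ S} => ((h i j : ℝ) : ℂ))
        = (Matrix.of fun i j : {x // x ∈ S} => h i j).map Complex.ofRealHom from rfl]
    rw [← RingHom.mapMatrix_apply, ← RingHom.map_det]
    rfl
  rw [← hdet, Finset.mul_sum, Finset.mul_sum]
  refine Finset.sum_congr rfl fun σ _ => ?_
  ring

end Main

section Limit

lemma pi_I_ne_zero : ((π:ℝ):ℂ) * I ≠ 0 := by
  simp [Real.pi_ne_zero, I_ne_zero]

lemma div_pi_I : ((π:ℝ):ℂ) / (↑π * I) = -I := by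
  rw [div_eq_iff pi_I_ne_zero]
  have : (-I) * (↑π * I) = ↑π * (-(I*I)) := by ring
  rw [this, Complex.I_mul_I]
  ring

lemma neg_I_mem_slitPlane : (-I : ℂ) ∈ Complex.slitPlane := by
  simp [Complex.mem_slitPlane_iff]

lemma neg_I_cpow_half : (-I : ℂ) ^ (1/2 : ℂ) = Complex.exp (-(↑π * I) / 4) := by
  rw [Complex.cpow_def_of_ne_zero (by simp [I_ne_zero]), Complex.log_neg_I]
  congr 1
  push_cast
  ring


set_option maxHeartbeats 1000000 in
/-- as `ε → 0⁺`, the Fourier transform of the `ε`-regularized modified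
Feynman density converges pointwise:
`lim_{ε→0⁺} ∫ Δ_W(g) e^{−(ε+iπ)Tr(gᵀg)} e^{2πi Tr(gᵀh)} dg
  = e^{−iπn²/4} Δ_W(h) e^{iπ Tr(hᵀh)}`. -/
theorem modifiedFeynman_fourier (n : ℕ) (hn : 1 ≤ n) (h : Matrix (Fin n) (Fin n) ℝ) :
    Filter.Tendsto
      (fun ε : ℝ =>
        ∫ g : Matrix (Fin n) (Fin n) ℝ,
          (DeltaW g : ℂ)
            * Complex.exp (-((ε : ℂ) + Real.pi * Complex.I) * (((gᵀ * g).trace : ℝ) : ℂ))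
            * Complex.exp (2 * Real.pi * Complex.I * (((gᵀ * h).trace : ℝ) : ℂ)))
      (nhdsWithin 0 (Set.Ioi 0))
      (nhds (Complex.exp (-(Real.pi * Complex.I * (n : ℂ) ^ 2) / 4) * (DeltaW h : ℂ)
        * Complex.exp (Real.pi * Complex.I * (((hᵀ * h).trace : ℝ) : ℂ)))) := by
  set F : ℂ → ℂ := fun b => ((↑π / b) ^ (1/2 : ℂ)) ^ (n * n)
      * Complex.exp (-(π:ℂ) ^ 2 * (((hᵀ * h).trace : ℝ) : ℂ) / b)
      * ∑ S : Finset (Fin n), (n.choose S.card : ℂ)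
          * ((I * π / b) ^ S.card * ((principalMinor h S : ℝ) : ℂ)) with hF
  have hcongr : ∀ᶠ (ε : ℝ) in nhdsWithin (0:ℝ) (Set.Ioi 0),
      F ((ε:ℂ) + ↑π * I)
        = ∫ g : Matrix (Fin n) (Fin n) ℝ,
          (DeltaW g : ℂ)
            * Complex.exp (-((ε : ℂ) + Real.pi * Complex.I) * (((gᵀ * g).trace : ℝ) : ℂ))
            * Complex.exp (2 * Real.pi * Complex.I * (((gᵀ * h).trace : ℝ) : ℂ)) := by
    filter_upwards [self_mem_nhdsWithin] with ε hε
    have hb : 0 < ((ε:ℂ) + ↑π * I).re := by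
      simpa using (hε : (0:ℝ) < ε)
    exact (main_identity hb h).symm
  -- continuity of F at π I
  have h1 : Filter.Tendsto (fun ε : ℝ => (ε:ℂ) + ↑π * I) (nhdsWithin 0 (Set.Ioi 0))
      (nhds (↑π * I)) := by
    have h0 : Filter.Tendsto (fun ε : ℝ => (ε:ℂ)) (nhdsWithin (0:ℝ) (Set.Ioi 0)) (nhds 0) := by
      simpa using (Complex.continuous_ofReal.tendsto 0).mono_left
        (nhdsWithin_le_nhds (s := Set.Ioi (0:ℝ)))
    simpa using h0.add (tendsto_const_nhds :
      Filter.Tendsto (fun _ : ℝ => (↑π * I : ℂ)) (nhdsWithin (0:ℝ) (Set.Ioi 0)) (nhds (↑π * I)))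
  have hcont : ContinuousAt F (↑π * I) := by
    rw [hF]
    refine ContinuousAt.mul (ContinuousAt.mul ?_ ?_) ?_
    · refine ContinuousAt.pow ?_ _
      have hdiv : ContinuousAt (fun b : ℂ => (π:ℂ) / b) (↑π * I) :=
        ContinuousAt.div continuousAt_const continuousAt_id pi_I_ne_zero
      exact hdiv.cpow continuousAt_const (div_pi_I ▸ neg_I_mem_slitPlane)
    · exact Complex.continuous_exp.continuousAt.comp
        (continuousAt_const.div continuousAt_id pi_I_ne_zero)
    · refine tendsto_finset_sum _ fun S _ => ?_
      refine ContinuousAt.mul continuousAt_const (ContinuousAt.mul (ContinuousAt.pow ?_ _)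
        continuousAt_const)
      exact continuousAt_const.div continuousAt_id pi_I_ne_zero
  have htendF := (hcont.tendsto).comp h1
  have hFval : F (↑π * I)
      = Complex.exp (-(Real.pi * Complex.I * (n : ℂ) ^ 2) / 4) * (DeltaW h : ℂ)
        * Complex.exp (Real.pi * Complex.I * (((hᵀ * h).trace : ℝ) : ℂ)) := by
    rw [hF]
    simp only
    rw [div_pi_I, neg_I_cpow_half, ← Complex.exp_nat_mul]
    have e2 : -(π:ℂ) ^ 2 * (((hᵀ * h).trace : ℝ) : ℂ) / (↑π * I)
        = ↑π * I * (((hᵀ * h).trace : ℝ) : ℂ) := by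
      rw [div_eq_iff pi_I_ne_zero]
      have : (↑π * I * (((hᵀ * h).trace : ℝ) : ℂ)) * (↑π * I)
          = (π:ℂ)^2 * (((hᵀ * h).trace : ℝ) : ℂ) * (I * I) := by ring
      rw [this, Complex.I_mul_I]
      ring
    rw [e2]
    have e3 : (I * (π:ℂ) / (↑π * I)) = 1 := by
      rw [mul_comm I (π:ℂ)]
      exact div_self pi_I_ne_zero
    simp only [e3, one_pow, one_mul]
    have e4 : ∑ S : Finset (Fin n), (n.choose S.card : ℂ) * ((principalMinor h S : ℝ) : ℂ)
        = (DeltaW h : ℂ) := by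
      rw [DeltaW]
      push_cast
      rfl
    rw [e4]
    have e5 : ((n*n : ℕ):ℂ) * (-(↑π*I)/4) = -(Real.pi * Complex.I * (n:ℂ)^2)/4 := by
      push_cast; ring
    rw [e5]
    ring
  rw [hFval] at htendF
  exact htendF.congr' hcongr

end Limit
end

section
/- For every fixed y ∈ ℝ, the Fourier transform of the regularized Feynman Gaussian converges as ε → 0⁺: lim_{ε→0⁺} ∫_ℝ e^{−(ε+iπ)x²} e^{2πixy} dx = e^{−iπ/4} · e^{iπy²}. -/
/-!
For `ε > 0` the regularized Gaussian is integrable and its Fourier transform has the classical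
closed form `(π / b) ^ (1/2) * exp (-t² / (4b))` with `b = ε + πi` and `t = 2πy`. This closed form
is continuous in `b` wherever `π / b` avoids the branch cut of the square root, in particular at
`b = πi`, where `π / b = -i`. So the limit is its value at `b = πi`, namely
`(-i) ^ (1/2) * exp (iπy²) = exp (-iπ/4) * exp (iπy²)`.
-/

open MeasureTheory Complex Real Filter Topology

noncomputable def gaussianFourierClosedForm (b t : ℂ) : ℂ :=
  (π / b) ^ (1 / 2 : ℂ) * cexp (-t ^ 2 / (4 * b))

theorem integral_gaussian_mul_cexp_I_mul {b : ℂ} (hb : 0 < b.re) (t : ℂ) :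
    ∫ x : ℝ, cexp (-b * x ^ 2) * cexp (I * t * x) = gaussianFourierClosedForm b t := by
  simp_rw [mul_comm (cexp (-b * _))]
  exact fourierIntegral_gaussian hb t

theorem continuousAt_gaussianFourierClosedForm {b : ℂ} (hb : (π : ℂ) / b ∈ slitPlane) (t : ℂ) :
    ContinuousAt (gaussianFourierClosedForm · t) b := by
  have hb₀ : b ≠ 0 := by
    rintro rfl
    simp at hb
  exact ((continuousAt_cpow_const hb).comp (continuousAt_const.div continuousAt_id hb₀)).mul
    (continuous_exp.continuousAt.comp
      (continuousAt_const.div (continuousAt_const.mul continuousAt_id) (by simpa using hb₀)))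

theorem pi_div_pi_mul_I : (π : ℂ) / (π * I) = -I := by
  rw [div_mul_eq_div_div, div_self (ofReal_ne_zero.mpr pi_ne_zero), div_I, one_mul]

theorem neg_I_cpow_one_half : (-I) ^ (1 / 2 : ℂ) = cexp (-(π * I) / 4) := by
  rw [cpow_def_of_ne_zero (neg_ne_zero.mpr I_ne_zero), log_neg_I]
  ring_nf

theorem gaussianFourierClosedForm_pi_mul_I (y : ℝ) :
    gaussianFourierClosedForm (π * I) (2 * π * y) = cexp (-(π * I) / 4) * cexp (π * I * y ^ 2) := by
  have hπ : (π : ℂ) ≠ 0 := ofReal_ne_zero.mpr pi_ne_zero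
  rw [gaussianFourierClosedForm, pi_div_pi_mul_I, neg_I_cpow_one_half]
  congr 2
  field_simp
  ring_nf
  rw [I_sq]
  ring

/-- for every `y ∈ ℝ`, the Fourier transform of the regularized Feynman
Gaussian converges as `ε → 0⁺`:
`lim_{ε→0⁺} ∫_ℝ e^{−(ε+iπ)x²} e^{2πixy} dx = e^{−iπ/4} e^{iπy²}`. -/
theorem feynman_gaussian_fourier_limit (y : ℝ) :
    Filter.Tendsto
      (fun ε : ℝ =>
        ∫ x : ℝ, Complex.exp (-((ε : ℂ) + Real.pi * Complex.I) * (x : ℂ) ^ 2)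
          * Complex.exp (2 * Real.pi * Complex.I * (x : ℂ) * (y : ℂ)))
      (nhdsWithin 0 (Set.Ioi 0))
      (nhds (Complex.exp (-(Real.pi * Complex.I) / 4)
        * Complex.exp (Real.pi * Complex.I * (y : ℂ) ^ 2))) := by
  have h_integral : ∀ ε : ℝ, 0 < ε →
      (∫ x : ℝ, cexp (-((ε : ℂ) + π * I) * x ^ 2) * cexp (2 * π * I * x * y)) =
        gaussianFourierClosedForm (ε + π * I) (2 * π * y) := by
    intro ε hε
    rw [← integral_gaussian_mul_cexp_I_mul (by simpa using hε)]
    congr 1 with x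
    ring_nf
  have h_shift : Tendsto (fun ε : ℝ => (ε : ℂ) + π * I) (𝓝[>] 0) (𝓝 (π * I)) := by
    have h : Continuous (fun ε : ℝ => (ε : ℂ) + π * I) := by fun_prop
    simpa using (h.tendsto 0).mono_left nhdsWithin_le_nhds
  have h_cont : ContinuousAt (gaussianFourierClosedForm · (2 * π * y)) (π * I) :=
    continuousAt_gaussianFourierClosedForm (by simp [pi_div_pi_mul_I, mem_slitPlane_iff]) _
  have h_lim := h_cont.tendsto.comp h_shift
  rw [gaussianFourierClosedForm_pi_mul_I] at h_lim
  refine h_lim.congr' ?_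
  filter_upwards [self_mem_nhdsWithin] with ε hε
  exact (h_integral ε hε).symm
end

section
/- For every fixed y ∈ ℝ, lim_{ε→0⁺} ∫_ℝ x e^{−(ε+iπ)x²} e^{2πixy} dx = e^{−iπ/4} · y · e^{iπy²}. -/
open MeasureTheory

open Complex Filter Real Set in
private lemma aux15_re {b c : ℂ} (x : ℝ) :
    (-b * (x:ℂ) ^ 2 + c * (x:ℂ)).re = -b.re * x ^ 2 + c.re * x := by
  simp [Complex.add_re, Complex.mul_re, ← Complex.ofReal_pow]

open Complex Filter Real Set in
private lemma aux15_key {a m x : ℝ} (ha : 0 < a) :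
    -a * x ^ 2 + m * x ≤ -(a/2) * x ^ 2 + m ^ 2 / (2 * a) := by
  have h0 : 0 ≤ a * (x - m/a)^2 := mul_nonneg ha.le (sq_nonneg _)
  have h1 : a * (x - m/a)^2 = a*x^2 - 2*m*x + m^2/a := by field_simp; ring
  have h2 : m^2/(2*a) = (m^2/a)/2 := by ring
  linarith

open Complex Filter Real Set in
private lemma aux15_integrable_x_mul {b : ℂ} (hb : 0 < b.re) (c : ℂ) :
    Integrable (fun x : ℝ => (x : ℂ) * Complex.exp (-b * (x:ℂ) ^ 2 + c * (x:ℂ))) := by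
  set a := b.re
  have ha2 : 0 < a / 2 := by positivity
  refine Integrable.mono'
    (((integrable_mul_exp_neg_mul_sq ha2).abs).const_mul (rexp (c.re ^ 2 / (2 * a)))) ?_ ?_
  · exact (Complex.continuous_ofReal.mul
      (Complex.continuous_exp.comp (by continuity))).aestronglyMeasurable
  · filter_upwards with x
    rw [norm_mul, Complex.norm_exp, aux15_re,
        Complex.norm_real, Real.norm_eq_abs]
    calc |x| * rexp (-a * x ^ 2 + c.re * x)
        ≤ |x| * rexp (-(a/2) * x ^ 2 + c.re ^ 2 / (2 * a)) := by
          exact mul_le_mul_of_nonneg_left (Real.exp_le_exp.2 (aux15_key hb)) (abs_nonneg x)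
      _ = rexp (c.re ^ 2 / (2 * a)) * |x * rexp (-(a/2) * x ^ 2)| := by
          rw [Real.exp_add, abs_mul, abs_of_pos (Real.exp_pos _)]; ring

open Complex Filter Real Set in
private lemma aux15_integral_x_mul {b : ℂ} (hb : 0 < b.re) (c : ℂ) :
    ∫ x : ℝ, (x : ℂ) * Complex.exp (-b * (x:ℂ) ^ 2 + c * (x:ℂ))
      = c / (2 * b) * ((↑π / b) ^ (1/2 : ℂ) * Complex.exp (c ^ 2 / (4 * b))) := by
  have hb0 : b ≠ 0 := fun h => by simp [h] at hb
  set F : ℝ → ℂ := fun x => Complex.exp (-b * (x:ℂ) ^ 2 + c * (x:ℂ)) with hF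
  have hFint : Integrable F := by
    simpa [hF, neg_mul] using integrable_cexp_quadratic hb c 0
  have hxFint : Integrable (fun x : ℝ => (x:ℂ) * F x) := aux15_integrable_x_mul hb c
  have hderiv : ∀ x : ℝ, HasDerivAt F ((c - 2 * b * x) * F x) x := by
    intro x
    have h0 : HasDerivAt (fun z : ℂ => -b * z ^ 2 + c * z) (-b * (2 * (x:ℂ)) + c) x := by
      exact
        (((hasDerivAt_pow 2 (x:ℂ)).const_mul (-b)).add ((hasDerivAt_id (x:ℂ)).const_mul c)).congr_deriv
        (by simp)
    have h1 := (h0.cexp).comp_ofReal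
    convert h1 using 1
    simp only [hF]; ring
  have hF'int : Integrable (fun x : ℝ => (c - 2 * b * x) * F x) := by
    have h1 : (fun x : ℝ => (c - 2 * b * x) * F x)
        = fun x : ℝ => c * F x - (2 * b) * ((x:ℂ) * F x) := by
      funext x; ring
    rw [h1]
    exact (hFint.const_mul c).sub (hxFint.const_mul (2 * b))
  have hzero : ∫ x : ℝ, (c - 2 * b * x) * F x = 0 :=
    integral_eq_zero_of_hasDerivAt_of_integrable hderiv hF'int hFint
  have hFval : ∫ x : ℝ, F x = (↑π / b) ^ (1/2 : ℂ) * Complex.exp (c ^ 2 / (4 * b)) := by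
    have h := integral_cexp_quadratic (b := -b) (by simpa using hb) c 0
    simpa [hF, neg_mul, zero_sub, neg_neg, mul_neg, div_neg, neg_div] using h
  have split : (fun x : ℝ => (x:ℂ) * F x)
      = fun x : ℝ => (2 * b)⁻¹ * (c * F x - (c - 2 * b * x) * F x) := by
    funext x
    field_simp
    ring
  rw [split, integral_const_mul, integral_sub (hFint.const_mul c) hF'int, hzero, sub_zero,
      integral_const_mul, hFval]
  field_simp

open Complex Filter Real Set in
private lemma aux15_minus_I_cpow_half :
    (-Complex.I) ^ (1/2 : ℂ) = Complex.exp (-(↑π * Complex.I) / 4) := by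
  rw [Complex.cpow_def_of_ne_zero (neg_ne_zero.2 Complex.I_ne_zero), Complex.log_neg_I]
  congr 1
  ring

/-- for every `y ∈ ℝ`,
`lim_{ε→0⁺} ∫_ℝ x e^{−(ε+iπ)x²} e^{2πixy} dx = e^{−iπ/4} y e^{iπy²}`. -/
theorem feynman_gaussian_times_x_fourier_limit (y : ℝ) :
    Filter.Tendsto
      (fun ε : ℝ =>
        ∫ x : ℝ, (x : ℂ) * Complex.exp (-((ε : ℂ) + Real.pi * Complex.I) * (x : ℂ) ^ 2)
          * Complex.exp (2 * Real.pi * Complex.I * (x : ℂ) * (y : ℂ)))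
      (nhdsWithin 0 (Set.Ioi 0))
      (nhds (Complex.exp (-(Real.pi * Complex.I) / 4) * (y : ℂ)
        * Complex.exp (Real.pi * Complex.I * (y : ℂ) ^ 2))) := by
  open Complex Real Set Filter in
  have hp : ((π:ℝ) : ℂ) ≠ 0 := by exact_mod_cast Real.pi_ne_zero
  have hbI : ((π:ℂ) * Complex.I) ≠ 0 := mul_ne_zero hp Complex.I_ne_zero
  have hval1 : ((π:ℂ))/((π:ℂ)*Complex.I) = -Complex.I := by
    rw [div_mul_eq_div_div, div_self hp, one_div, Complex.inv_I]
  set h : ℂ → ℂ := fun z => (2*(π:ℂ)*Complex.I*(y:ℂ)) / (2*z) *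
      (((π:ℂ)/z)^(1/2:ℂ) * Complex.exp ((2*(π:ℂ)*Complex.I*(y:ℂ))^2/(4*z))) with hh
  have hcont : ContinuousAt h ((π:ℂ)*Complex.I) := by
    have h1 : ContinuousAt (fun z : ℂ => (π:ℂ)/z) ((π:ℂ)*Complex.I) :=
      continuousAt_const.div continuousAt_id hbI
    have h2 : ContinuousAt (fun w : ℂ => w ^ (1/2:ℂ)) ((π:ℂ)/((π:ℂ)*Complex.I)) := by
      apply continuousAt_cpow_const
      rw [hval1, Complex.mem_slitPlane_iff]
      right; simp
    refine ContinuousAt.mul (continuousAt_const.div (continuousAt_id.const_mul 2)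
        (by simpa using hbI)) (ContinuousAt.mul (h2.comp h1)
        (Complex.continuous_exp.continuousAt.comp
          (continuousAt_const.div (continuousAt_id.const_mul 4) (by simpa using hbI))))
  have hb : Filter.Tendsto (fun ε : ℝ => (ε:ℂ)+(π:ℂ)*Complex.I) (nhdsWithin 0 (Set.Ioi 0))
      (nhds ((π:ℂ)*Complex.I)) := by
    have hc : Continuous (fun ε : ℝ => (ε:ℂ)+(π:ℂ)*Complex.I) := by continuity
    exact (hc.tendsto' 0 _ (by simp)).mono_left nhdsWithin_le_nhds
  have hfin : h ((π:ℂ)*Complex.I) = Complex.exp (-(Real.pi * Complex.I) / 4) * (y : ℂ)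
      * Complex.exp (Real.pi * Complex.I * (y : ℂ) ^ 2) := by
    rw [hh]
    simp only
    rw [hval1, aux15_minus_I_cpow_half]
    have e1 : (2*(π:ℂ)*Complex.I*(y:ℂ)) / (2*((π:ℂ)*Complex.I)) = (y:ℂ) := by
      field_simp
    have e2 : (2*(π:ℂ)*Complex.I*(y:ℂ))^2/(4*((π:ℂ)*Complex.I)) = (π:ℂ)*Complex.I*(y:ℂ)^2 := by
      field_simp
      ring_nf
    rw [e1, e2]
    ring
  have htend : Filter.Tendsto (fun ε : ℝ => h ((ε:ℂ)+(π:ℂ)*Complex.I))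
      (nhdsWithin 0 (Set.Ioi 0))
      (nhds (Complex.exp (-(Real.pi * Complex.I) / 4) * (y : ℂ)
        * Complex.exp (Real.pi * Complex.I * (y : ℂ) ^ 2))) :=
    hfin ▸ hcont.tendsto.comp hb
  refine htend.congr' ?_
  filter_upwards [self_mem_nhdsWithin] with ε hε
  have hbre : 0 < (((ε:ℂ) + (π:ℂ)*Complex.I)).re := by simpa using hε
  have hint : ∀ x : ℝ, (x : ℂ) * Complex.exp (-((ε : ℂ) + Real.pi * Complex.I) * (x : ℂ) ^ 2)
        * Complex.exp (2 * Real.pi * Complex.I * (x : ℂ) * (y : ℂ))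
      = (x : ℂ) * Complex.exp (-((ε:ℂ) + (π:ℂ)*Complex.I) * (x:ℂ) ^ 2
          + (2*(π:ℂ)*Complex.I*(y:ℂ)) * (x:ℂ)) := by
    intro x
    rw [mul_assoc, ← Complex.exp_add]
    congr 2
    ring
  rw [hh]
  simp only
  rw [show (∫ x : ℝ, (x : ℂ) * Complex.exp (-((ε : ℂ) + Real.pi * Complex.I) * (x : ℂ) ^ 2)
          * Complex.exp (2 * Real.pi * Complex.I * (x : ℂ) * (y : ℂ)))
      = ∫ x : ℝ, (x : ℂ) * Complex.exp (-((ε:ℂ) + (π:ℂ)*Complex.I) * (x:ℂ) ^ 2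
          + (2*(π:ℂ)*Complex.I*(y:ℂ)) * (x:ℂ)) from integral_congr_ae
        (Filter.Eventually.of_forall hint)]
  rw [aux15_integral_x_mul hbre (2*(π:ℂ)*Complex.I*(y:ℂ))]
end
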